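/- arXiv:2309.08781 — 5 statements merged into one kernel-verified Lean document; each statement's English description precedes it below -/
import Mathlib

section
/- The maximum weight of a matching in a bipartite graph, viewed as a function of the subset of left vertices (sellers) available, is submodular: for sets of sellers S' ⊆ S and a seller j ∉ S, W(S ∪ {j}) − W(S) ≤ W(S' ∪ {j}) − W(S'). -/
open Finset

/-- A matching between buyers `B` and sellers `S` along edges of the bipartite graph `g`:
a set of (buyer, seller) pairs using only allowed edges, with each buyer and each seller
appearing at most once. -/
def IsMatching (B S : Finset ℕ) (g : ℕ → ℕ → Prop) (M : Finset (ℕ × ℕ)) : Prop :=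
  (∀ e ∈ M, e.1 ∈ B ∧ e.2 ∈ S ∧ g e.1 e.2) ∧
  ∀ e ∈ M, ∀ e' ∈ M, e ≠ e' → e.1 ≠ e'.1 ∧ e.2 ≠ e'.2

/-- `W B S g v` is the maximum total weight of a matching between buyers `B` and sellers `S`
along edges of `g`, where the weight of edge (i, j) is `v i j`. -/
noncomputable def W (B S : Finset ℕ) (g : ℕ → ℕ → Prop) (v : ℕ → ℕ → ℝ) : ℝ :=
  sSup {x | ∃ M : Finset (ℕ × ℕ), IsMatching B S g M ∧ x = ∑ e ∈ M, v e.1 e.2}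


namespace IsMatching

variable {B S T : Finset ℕ} {g : ℕ → ℕ → Prop} {M M' : Finset (ℕ × ℕ)}

lemma subset (h : IsMatching B S g M) (hM' : M' ⊆ M) : IsMatching B S g M' :=
  ⟨fun e he => h.1 e (hM' he), fun e he e' he' hne => h.2 e (hM' he) e' (hM' he') hne⟩

lemma mono (h : IsMatching B S g M) (hST : S ⊆ T) : IsMatching B T g M :=
  ⟨fun e he => ⟨(h.1 e he).1, hST (h.1 e he).2.1, (h.1 e he).2.2⟩, h.2⟩

lemma buyer_eq (h : IsMatching B S g M) {e e' : ℕ × ℕ} (he : e ∈ M) (he' : e' ∈ M)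
    (h1 : e.1 = e'.1) : e = e' := by
  by_contra hne; exact (h.2 e he e' he' hne).1 h1

lemma seller_eq (h : IsMatching B S g M) {e e' : ℕ × ℕ} (he : e ∈ M) (he' : e' ∈ M)
    (h2 : e.2 = e'.2) : e = e' := by
  by_contra hne; exact (h.2 e he e' he' hne).2 h2

lemma insert' (h : IsMatching B S g M) {b s : ℕ}
    (hb : b ∈ B) (hs : s ∈ S) (hg : g b s)
    (hb' : ∀ e ∈ M, e.1 ≠ b) (hs' : ∀ e ∈ M, e.2 ≠ s) :
    IsMatching B S g (insert (b, s) M) := by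
  constructor
  · intro e he
    rcases Finset.mem_insert.1 he with rfl | he
    · exact ⟨hb, hs, hg⟩
    · exact h.1 e he
  · intro e he e' he' hne
    rcases Finset.mem_insert.1 he with rfl | he <;> rcases Finset.mem_insert.1 he' with rfl | he'
    · exact absurd rfl hne
    · exact ⟨fun h' => hb' e' he' h'.symm, fun h' => hs' e' he' h'.symm⟩
    · exact ⟨hb' e he, hs' e he⟩
    · exact h.2 e he e' he' hne

lemma empty : IsMatching B S g ∅ := by
  constructor <;> intro e he <;> simp at he

end IsMatching

lemma matching_subset_product {B S : Finset ℕ} {g : ℕ → ℕ → Prop} {M : Finset (ℕ × ℕ)}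
    (h : IsMatching B S g M) : M ⊆ B ×ˢ S := fun e he =>
  Finset.mem_product.2 ⟨(h.1 e he).1, (h.1 e he).2.1⟩

lemma matching_sum_le_W {B S : Finset ℕ} {g : ℕ → ℕ → Prop} {v : ℕ → ℕ → ℝ}
    (hv : ∀ i j, 0 ≤ v i j) {M : Finset (ℕ × ℕ)} (h : IsMatching B S g M) :
    ∑ e ∈ M, v e.1 e.2 ≤ W B S g v := by
  apply le_csSup
  · refine ⟨∑ e ∈ B ×ˢ S, v e.1 e.2, ?_⟩
    rintro x ⟨M', hM', rfl⟩
    exact Finset.sum_le_sum_of_subset_of_nonneg (matching_subset_product hM')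
      (fun i _ _ => hv _ _)
  · exact ⟨M, h, rfl⟩

lemma exists_W_eq (B S : Finset ℕ) (g : ℕ → ℕ → Prop) (v : ℕ → ℕ → ℝ) :
    ∃ M, IsMatching B S g M ∧ W B S g v = ∑ e ∈ M, v e.1 e.2 := by
  have hfin : {x | ∃ M, IsMatching B S g M ∧ x = ∑ e ∈ M, v e.1 e.2}.Finite := by
    have hsub : {x | ∃ M, IsMatching B S g M ∧ x = ∑ e ∈ M, v e.1 e.2} ⊆
        (fun M : Finset (ℕ × ℕ) => ∑ e ∈ M, v e.1 e.2) '' {M | M ⊆ B ×ˢ S} := by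
      rintro x ⟨M, hM, rfl⟩
      exact ⟨M, matching_subset_product hM, rfl⟩
    have hfin2 : {M : Finset (ℕ × ℕ) | M ⊆ B ×ˢ S}.Finite :=
      Set.Finite.ofFinset (B ×ˢ S).powerset (by simp [Finset.mem_powerset])
    exact (hfin2.image _).subset hsub
  have hne : {x | ∃ M, IsMatching B S g M ∧ x = ∑ e ∈ M, v e.1 e.2}.Nonempty :=
    ⟨0, ∅, IsMatching.empty, by simp⟩
  have := hne.csSup_mem hfin
  exact this

lemma exchange (B : Finset ℕ) (g : ℕ → ℕ → Prop) (v : ℕ → ℕ → ℝ)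
    (SA S' T' : Finset ℕ) (hS'A : S' ⊆ SA) (hS'T : S' ⊆ T') :
    ∀ n (A A' : Finset (ℕ × ℕ)) (D : Finset ℕ) (b s : ℕ),
      (A'.filter (fun e => e.2 ∉ D)).card ≤ n →
      IsMatching B SA g A → IsMatching B T' g A' →
      (∀ e ∈ A, e.1 ≠ b) → (∀ e ∈ A', e.2 ≠ s) →
      b ∈ B → s ∈ T' → g b s →
      (∀ e ∈ A', e.2 ∈ D → ∃ e' ∈ A, e'.1 = e.1 ∧ (e'.2 ∈ D ∨ e'.2 = s)) →
      (∀ e ∈ A', e.2 ∉ D → e.2 ∈ S') →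
      ∃ N N', IsMatching B SA g N ∧ IsMatching B T' g N' ∧
        ∑ e ∈ N, v e.1 e.2 + ∑ e ∈ N', v e.1 e.2
          = ∑ e ∈ A, v e.1 e.2 + ∑ e ∈ A', v e.1 e.2 + v b s := by
  intro n
  induction n with
  | zero =>
    intro A A' D b s hcard hA hA' hbA hsA' hbB hsT hgbs hinv hS'
    -- if some A'-edge has buyer b, we derive a contradiction with card = 0
    by_cases hb' : ∃ e ∈ A', e.1 = b
    case pos =>
      obtain ⟨⟨eb, s1⟩, he1, heb⟩ := hb'
      simp only at heb; subst eb
      have hs1D : s1 ∉ D := by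
        intro hD
        obtain ⟨e', he', he'b, _⟩ := hinv (b, s1) he1 hD
        exact hbA e' he' he'b
      have : (b, s1) ∈ A'.filter (fun e => e.2 ∉ D) := Finset.mem_filter.2 ⟨he1, hs1D⟩
      have := Finset.card_pos.2 ⟨_, this⟩
      omega
    case neg =>
      push_neg at hb'
      refine ⟨A, insert (b, s) A', hA, hA'.insert' hbB hsT hgbs hb' hsA', ?_⟩
      rw [Finset.sum_insert (fun h => hsA' _ h rfl)]
      ring
  | succ n ih =>
    intro A A' D b s hcard hA hA' hbA hsA' hbB hsT hgbs hinv hS'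
    by_cases hb' : ∃ e ∈ A', e.1 = b
    case neg =>
      push_neg at hb'
      refine ⟨A, insert (b, s) A', hA, hA'.insert' hbB hsT hgbs hb' hsA', ?_⟩
      rw [Finset.sum_insert (fun h => hsA' _ h rfl)]
      ring
    case pos =>
      obtain ⟨⟨eb, s1⟩, he1, heb⟩ := hb'
      simp only at heb; subst eb
      have hs1D : s1 ∉ D := by
        intro hD
        obtain ⟨e', he', he'b, _⟩ := hinv (b, s1) he1 hD
        exact hbA e' he' he'b
      have hs1S' : s1 ∈ S' := hS' _ he1 hs1D
      have hs1s : s1 ≠ s := fun h => hsA' _ he1 h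
      have hgbs1 : g b s1 := (hA'.1 _ he1).2.2
      have hbsA'e : (b, s) ∉ A'.erase (b, s1) :=
        fun h => hsA' _ (Finset.mem_of_mem_erase h) rfl
      have hbs1A : (b, s1) ∉ A := fun h => hbA _ h rfl
      -- the A'-matching with s1 replaced by s at buyer b
      have hN'aux : IsMatching B T' g (insert (b, s) (A'.erase (b, s1))) := by
        refine (hA'.subset (Finset.erase_subset _ _)).insert' hbB hsT hgbs ?_ ?_
        · intro e he heq
          have : e = (b, s1) := hA'.buyer_eq (Finset.mem_of_mem_erase he) he1 heq
          exact (Finset.mem_erase.1 he).1 this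
        · exact fun e he => hsA' e (Finset.mem_of_mem_erase he)
      have hsumA' : ∑ e ∈ insert (b, s) (A'.erase (b, s1)), v e.1 e.2
          = ∑ e ∈ A', v e.1 e.2 - v b s1 + v b s := by
        rw [Finset.sum_insert hbsA'e]
        have := Finset.sum_erase_add A' (fun e => v e.1 e.2) he1
        simp only at this
        linarith
      by_cases hs1A : ∃ e ∈ A, e.2 = s1
      case neg =>
        -- path ends: s1 free in A
        push_neg at hs1A
        refine ⟨insert (b, s1) A, insert (b, s) (A'.erase (b, s1)),
          hA.insert' hbB (hS'A hs1S') hgbs1 hbA hs1A, hN'aux, ?_⟩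
        rw [Finset.sum_insert hbs1A, hsumA']
        ring
      case pos =>
        -- path continues: s1 matched in A to b1; recurse
        obtain ⟨⟨b1, s1'⟩, he2, he2s⟩ := hs1A
        simp only at he2s; subst s1'
        have hbb1 : b ≠ b1 := fun h => hbA _ he2 h.symm
        have hb1B : b1 ∈ B := (hA.1 _ he2).1
        have hgb1s1 : g b1 s1 := (hA.1 _ he2).2.2
        have hbs1Ae : (b, s1) ∉ A.erase (b1, s1) :=
          fun h => hbA _ (Finset.mem_of_mem_erase h) rfl
        set Anew := insert (b, s1) (A.erase (b1, s1)) with hAnew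
        set A'new := insert (b, s) (A'.erase (b, s1)) with hA'new
        have hAm : IsMatching B SA g Anew := by
          refine (hA.subset (Finset.erase_subset _ _)).insert' hbB (hS'A hs1S') hgbs1
            (fun e he => hbA e (Finset.mem_of_mem_erase he)) ?_
          intro e he heq
          have : e = (b1, s1) := hA.seller_eq (Finset.mem_of_mem_erase he) he2 heq
          exact (Finset.mem_erase.1 he).1 this
        -- side conditions for the induction hypothesis
        have hcard' : (A'new.filter (fun e => e.2 ∉ insert s D)).card ≤ n := by
          have hsub2 : A'new.filter (fun e => e.2 ∉ insert s D) ⊆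
              (A'.filter (fun e => e.2 ∉ D)).erase (b, s1) := by
            intro e he
            obtain ⟨he, heD⟩ := Finset.mem_filter.1 he
            rcases Finset.mem_insert.1 he with rfl | he
            · exact absurd (Finset.mem_insert_self _ _) heD
            · refine Finset.mem_erase.2 ⟨(Finset.mem_erase.1 he).1, Finset.mem_filter.2
                ⟨(Finset.mem_erase.1 he).2, fun h => heD (Finset.mem_insert_of_mem h)⟩⟩
          have hmem : (b, s1) ∈ A'.filter (fun e => e.2 ∉ D) :=
            Finset.mem_filter.2 ⟨he1, hs1D⟩
          have hle := Finset.card_le_card hsub2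
          rw [Finset.card_erase_of_mem hmem] at hle
          have hpos := Finset.card_pos.2 ⟨_, hmem⟩
          omega
        have hb1A : ∀ e ∈ Anew, e.1 ≠ b1 := by
          intro e he heq
          rcases Finset.mem_insert.1 he with rfl | he
          · exact hbb1 heq
          · have : e = (b1, s1) := hA.buyer_eq (Finset.mem_of_mem_erase he) he2 heq
            exact (Finset.mem_erase.1 he).1 this
        have hs1A' : ∀ e ∈ A'new, e.2 ≠ s1 := by
          intro e he heq
          rcases Finset.mem_insert.1 he with rfl | he
          · exact hs1s heq.symm
          · have : e = (b, s1) := hA'.seller_eq (Finset.mem_of_mem_erase he) he1 heq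
            exact (Finset.mem_erase.1 he).1 this
        have hinv' : ∀ e ∈ A'new, e.2 ∈ insert s D →
            ∃ e' ∈ Anew, e'.1 = e.1 ∧ (e'.2 ∈ insert s D ∨ e'.2 = s1) := by
          intro e he heD
          rcases Finset.mem_insert.1 he with rfl | he
          · exact ⟨(b, s1), Finset.mem_insert_self _ _, rfl, Or.inr rfl⟩
          · have heA' : e ∈ A' := Finset.mem_of_mem_erase he
            have heD' : e.2 ∈ D := by
              rcases Finset.mem_insert.1 heD with h | h
              · exact absurd h (hsA' e heA')
              · exact h
            obtain ⟨e', he', he'b, he'D⟩ := hinv e heA' heD'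
            have he'ne : e' ≠ (b1, s1) := by
              rintro rfl
              rcases he'D with h | h
              · exact hs1D h
              · exact hs1s h
            refine ⟨e', Finset.mem_insert_of_mem (Finset.mem_erase.2 ⟨he'ne, he'⟩), he'b, ?_⟩
            rcases he'D with h | h
            · exact Or.inl (Finset.mem_insert_of_mem h)
            · exact Or.inl (h ▸ Finset.mem_insert_self _ _)
        have hS'' : ∀ e ∈ A'new, e.2 ∉ insert s D → e.2 ∈ S' := by
          intro e he heD
          rcases Finset.mem_insert.1 he with rfl | he
          · exact absurd (Finset.mem_insert_self _ _) heD
          · exact hS' e (Finset.mem_of_mem_erase he)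
              (fun h => heD (Finset.mem_insert_of_mem h))
        obtain ⟨N, N', hN, hN', hsum⟩ :=
          ih Anew A'new (insert s D) b1 s1 hcard' hAm hN'aux hb1A hs1A' hb1B
            (hS'T hs1S') hgb1s1 hinv' hS''
        refine ⟨N, N', hN, hN', ?_⟩
        have hsumA : ∑ e ∈ Anew, v e.1 e.2 = ∑ e ∈ A, v e.1 e.2 - v b1 s1 + v b s1 := by
          rw [hAnew, Finset.sum_insert hbs1Ae]
          have := Finset.sum_erase_add A (fun e => v e.1 e.2) he2
          simp only at this
          linarith
        have hsumA'2 : ∑ e ∈ A'new, v e.1 e.2 = ∑ e ∈ A', v e.1 e.2 - v b s1 + v b s := hsumA'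
        rw [hsum, hsumA, hsumA'2]
        ring

lemma exchange_main (B : Finset ℕ) (g : ℕ → ℕ → Prop) (v : ℕ → ℕ → ℝ)
    (S S' : Finset ℕ) (hsub : S' ⊆ S) (j : ℕ) (hj : j ∉ S)
    (M M' : Finset (ℕ × ℕ)) (hM : IsMatching B (insert j S) g M)
    (hM' : IsMatching B S' g M') :
    ∃ N N', IsMatching B S g N ∧ IsMatching B (insert j S') g N' ∧
      ∑ e ∈ N, v e.1 e.2 + ∑ e ∈ N', v e.1 e.2
        = ∑ e ∈ M, v e.1 e.2 + ∑ e ∈ M', v e.1 e.2 := by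
  have hjS' : j ∉ S' := fun h => hj (hsub h)
  have hsA' : ∀ e ∈ M', e.2 ≠ j := fun e he h => hjS' (h ▸ (hM'.1 e he).2.1)
  by_cases hjM : ∃ e ∈ M, e.2 = j
  case neg =>
    push_neg at hjM
    refine ⟨M, M', ⟨fun e he => ?_, hM.2⟩,
      hM'.mono (Finset.subset_insert _ _), rfl⟩
    obtain ⟨h1, h2, h3⟩ := hM.1 e he
    exact ⟨h1, (Finset.mem_insert.1 h2).resolve_left (hjM e he), h3⟩
  case pos =>
    obtain ⟨⟨b, j'⟩, he, hej⟩ := hjM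
    simp only at hej; subst j'
    have hA : IsMatching B S g (M.erase (b, j)) := by
      refine ⟨fun e heA => ?_, fun e heA e' heA' hne =>
        hM.2 e (Finset.mem_of_mem_erase heA) e' (Finset.mem_of_mem_erase heA') hne⟩
      obtain ⟨h1, h2, h3⟩ := hM.1 e (Finset.mem_of_mem_erase heA)
      refine ⟨h1, ?_, h3⟩
      rcases Finset.mem_insert.1 h2 with hh | hh
      · exact absurd (hM.seller_eq (Finset.mem_of_mem_erase heA) he hh)
          (Finset.mem_erase.1 heA).1
      · exact hh
    obtain ⟨N, N', hN, hN', hsum⟩ :=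
      exchange B g v S S' (insert j S') hsub (Finset.subset_insert _ _)
        (M'.filter (fun e => e.2 ∉ (∅ : Finset ℕ))).card (M.erase (b, j)) M' ∅ b j
        le_rfl hA (hM'.mono (Finset.subset_insert _ _))
        (fun e heA h => (Finset.mem_erase.1 heA).1
          (hM.buyer_eq (Finset.mem_of_mem_erase heA) he h))
        hsA' (hM.1 _ he).1 (Finset.mem_insert_self _ _) (hM.1 _ he).2.2
        (by simp) (fun e heM' _ => (hM'.1 e heM').2.1)
    refine ⟨N, N', hN, hN', ?_⟩
    rw [hsum]
    have := Finset.sum_erase_add M (fun e => v e.1 e.2) he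
    simp only at this
    linarith

/-- Submodularity of the maximum-weight bipartite matching value in the set of
available sellers: for `S' ⊆ S` and a seller `j ∉ S`,
`W (S ∪ {j}) − W S ≤ W (S' ∪ {j}) − W S'`. -/
theorem max_matching_submodular (B : Finset ℕ) (g : ℕ → ℕ → Prop) (v : ℕ → ℕ → ℝ)
    (hv : ∀ i j, 0 ≤ v i j) (S S' : Finset ℕ) (hsub : S' ⊆ S) (j : ℕ) (hj : j ∉ S) :
    W B (insert j S) g v - W B S g v ≤ W B (insert j S') g v - W B S' g v := by
  obtain ⟨M, hM, hWM⟩ := exists_W_eq B (insert j S) g v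
  obtain ⟨M', hM', hWM'⟩ := exists_W_eq B S' g v
  obtain ⟨N, N', hN, hN', hsum⟩ := exchange_main B g v S S' hsub j hj M M' hM hM'
  have h1 : ∑ e ∈ N, v e.1 e.2 ≤ W B S g v := matching_sum_le_W hv hN
  have h2 : ∑ e ∈ N', v e.1 e.2 ≤ W B (insert j S') g v := matching_sum_le_W hv hN'
  linarith
end

section
/- For any two finite sets of sellers S₁ and S₂, the maximum-weight bipartite matching value satisfies W(S₁) + W(S₂) ≥ W(S₁ ∪ S₂) + W(S₁ ∩ S₂). -/
open Finset

def IsM (B S : Finset ℕ) (M : Finset (ℕ × ℕ)) : Prop :=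
  (∀ e ∈ M, e.1 ∈ B ∧ e.2 ∈ S) ∧
  ∀ e ∈ M, ∀ e' ∈ M, e ≠ e' → e.1 ≠ e'.1 ∧ e.2 ≠ e'.2

lemma IsM.subset {B S : Finset ℕ} {M M' : Finset (ℕ × ℕ)} (h : IsM B S M) (hs : M' ⊆ M) :
    IsM B S M' :=
  ⟨fun e he => h.1 e (hs he), fun e he e' he' hne => h.2 e (hs he) e' (hs he') hne⟩

lemma IsM.eq_of_fst {B S : Finset ℕ} {M : Finset (ℕ × ℕ)} {e f : ℕ × ℕ} (h : IsM B S M)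
    (he : e ∈ M) (hf : f ∈ M) (h1 : f.1 = e.1) : f = e := by
  by_contra hne
  exact (h.2 f hf e he hne).1 h1

lemma IsM.eq_of_snd {B S : Finset ℕ} {M : Finset (ℕ × ℕ)} {e f : ℕ × ℕ} (h : IsM B S M)
    (he : e ∈ M) (hf : f ∈ M) (h1 : f.2 = e.2) : f = e := by
  by_contra hne
  exact (h.2 f hf e he hne).2 h1

lemma IsM.insert' {B S : Finset ℕ} {M : Finset (ℕ × ℕ)} {e : ℕ × ℕ} (h : IsM B S M)
    (hB : e.1 ∈ B) (hS : e.2 ∈ S)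
    (h1 : ∀ f ∈ M, f.1 ≠ e.1) (h2 : ∀ f ∈ M, f.2 ≠ e.2) : IsM B S (insert e M) := by
  constructor
  · intro f hf
    rcases Finset.mem_insert.1 hf with rfl | hf
    · exact ⟨hB, hS⟩
    · exact h.1 f hf
  · intro f hf f' hf' hne
    rcases Finset.mem_insert.1 hf with hf | hf
    · rcases Finset.mem_insert.1 hf' with hf' | hf'
      · exact absurd (hf.trans hf'.symm) hne
      · rw [hf]
        exact ⟨fun hh => h1 f' hf' hh.symm, fun hh => h2 f' hf' hh.symm⟩
    · rcases Finset.mem_insert.1 hf' with hf' | hf'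
      · rw [hf']
        exact ⟨h1 f hf, h2 f hf⟩
      · exact h.2 f hf f' hf' hne

lemma split (B S₁ S₂ : Finset ℕ) :
    ∀ n : ℕ, ∀ N M : Finset (ℕ × ℕ), N.card = n →
      IsM B (S₁ ∪ S₂) M → IsM B (S₁ ∩ S₂) N →
      ∃ M₁ M₂, IsM B S₁ M₁ ∧ IsM B S₂ M₂ ∧ M₁ ∪ M₂ = M ∪ N ∧ M₁ ∩ M₂ = M ∩ N := by
  classical
  intro n
  induction n with
  | zero =>
    intro N M hc hM hN
    have hN0 : N = ∅ := Finset.card_eq_zero.1 hc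
    subst hN0
    refine ⟨M.filter (fun f => f.2 ∈ S₁), M.filter (fun f => f.2 ∉ S₁), ?_, ?_, ?_, ?_⟩
    · refine ⟨fun f hf => ?_, fun f hf f' hf' hne =>
        hM.2 f (Finset.filter_subset _ _ hf) f' (Finset.filter_subset _ _ hf') hne⟩
      have h2 := Finset.mem_filter.1 hf
      exact ⟨(hM.1 f h2.1).1, h2.2⟩
    · refine ⟨fun f hf => ?_, fun f hf f' hf' hne =>
        hM.2 f (Finset.filter_subset _ _ hf) f' (Finset.filter_subset _ _ hf') hne⟩
      have h2 := Finset.mem_filter.1 hf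
      rcases Finset.mem_union.1 (hM.1 f h2.1).2 with h | h
      · exact absurd h h2.2
      · exact ⟨(hM.1 f h2.1).1, h⟩
    · rw [Finset.filter_union_filter_not_eq]
      simp
    · rw [← Finset.filter_and]
      simp
  | succ n ih =>
    intro N M hc hM hN
    have hNne : N.Nonempty := Finset.card_pos.1 (by omega)
    obtain ⟨e, he⟩ := hNne
    set N' := N.erase e with hN'def
    have hN' : IsM B (S₁ ∩ S₂) N' := hN.subset (Finset.erase_subset _ _)
    have hcN' : N'.card = n := by
      rw [hN'def, Finset.card_erase_of_mem he, hc]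
      omega
    have heB : e.1 ∈ B := (hN.1 e he).1
    have heS : e.2 ∈ S₁ ∩ S₂ := (hN.1 e he).2
    have heS1 : e.2 ∈ S₁ := (Finset.mem_inter.1 heS).1
    have heS2 : e.2 ∈ S₂ := (Finset.mem_inter.1 heS).2
    have keyN1 : ∀ f ∈ N', f.1 ≠ e.1 := fun f hf h' =>
      (Finset.ne_of_mem_erase hf) (hN.eq_of_fst he (Finset.mem_of_mem_erase hf) h')
    have keyN2 : ∀ f ∈ N', f.2 ≠ e.2 := fun f hf h' =>
      (Finset.ne_of_mem_erase hf) (hN.eq_of_snd he (Finset.mem_of_mem_erase hf) h')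
    by_cases heM : e ∈ M
    · -- e is a common edge: put it on both sides
      obtain ⟨M₁, M₂, h₁, h₂, hu, hi⟩ := ih N' (M.erase e) hcN'
        (hM.subset (Finset.erase_subset _ _)) hN'
      have key1 : ∀ f ∈ M₁ ∪ M₂, f.1 ≠ e.1 := by
        intro f hf h'
        rw [hu] at hf
        rcases Finset.mem_union.1 hf with hf | hf
        · exact (Finset.ne_of_mem_erase hf) (hM.eq_of_fst heM (Finset.mem_of_mem_erase hf) h')
        · exact keyN1 f hf h'
      have key2 : ∀ f ∈ M₁ ∪ M₂, f.2 ≠ e.2 := by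
        intro f hf h'
        rw [hu] at hf
        rcases Finset.mem_union.1 hf with hf | hf
        · exact (Finset.ne_of_mem_erase hf) (hM.eq_of_snd heM (Finset.mem_of_mem_erase hf) h')
        · exact keyN2 f hf h'
      refine ⟨insert e M₁, insert e M₂,
        h₁.insert' heB heS1 (fun f hf => key1 f (Finset.mem_union_left _ hf))
          (fun f hf => key2 f (Finset.mem_union_left _ hf)),
        h₂.insert' heB heS2 (fun f hf => key1 f (Finset.mem_union_right _ hf))
          (fun f hf => key2 f (Finset.mem_union_right _ hf)), ?_, ?_⟩
      · rw [Finset.insert_union, Finset.union_insert, Finset.insert_idem, hu,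
          ← Finset.erase_union_distrib, Finset.insert_erase (Finset.mem_union_left _ heM)]
      · rw [← Finset.insert_inter_distrib, hi]
        ext x
        simp only [Finset.mem_insert, Finset.mem_inter, Finset.mem_erase, hN'def]
        constructor
        · rintro (rfl | ⟨⟨-, h1⟩, -, h2⟩)
          · exact ⟨heM, he⟩
          · exact ⟨h1, h2⟩
        · rintro ⟨h1, h2⟩
          by_cases hx : x = e
          · exact Or.inl hx
          · exact Or.inr ⟨⟨hx, h1⟩, hx, h2⟩
    · -- e ∉ M
      have heMN' : e ∉ M ∪ N' := by
        intro h
        rcases Finset.mem_union.1 h with h | h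
        · exact heM h
        · exact (Finset.ne_of_mem_erase h) rfl
      have hMN' : M ∩ N' = M ∩ N := by
        ext x
        simp only [Finset.mem_inter, hN'def, Finset.mem_erase]
        constructor
        · rintro ⟨h1, -, h2⟩; exact ⟨h1, h2⟩
        · rintro ⟨h1, h2⟩; exact ⟨h1, fun hx => heM (hx ▸ h1), h2⟩
      by_cases hb : ∃ f ∈ M, f.1 = e.1
      · by_cases hs : ∃ f ∈ M, f.2 = e.2
        · -- case 4 : both conflicts; contract the path Mb - e - Ms to a virtual edge
          obtain ⟨Mb, hMbM, hMb1⟩ := hb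
          obtain ⟨Ms, hMsM, hMs2⟩ := hs
          have hMbMs : Mb ≠ Ms := by
            intro h
            exact heM ((Prod.ext_iff.2 ⟨hMb1, by rw [h, hMs2]⟩ : Mb = e) ▸ hMbM)
          have hbne : Mb.1 ≠ Ms.1 := fun h => hMbMs (hM.eq_of_fst hMsM hMbM h)
          have hsne : Mb.2 ≠ Ms.2 := fun h => hMbMs (hM.eq_of_snd hMsM hMbM h)
          have hMs1ne : Ms.1 ≠ e.1 := fun h => hbne (hMb1.trans h.symm)
          have hMb2ne : Mb.2 ≠ e.2 := fun h => hsne (h.trans hMs2.symm)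
          have hMbNn : Mb ∉ N := fun h => heM ((hN.eq_of_fst he h hMb1) ▸ hMbM)
          have hMsNn : Ms ∉ N := fun h => heM ((hN.eq_of_snd he h hMs2) ▸ hMsM)
          obtain ⟨virt, hvirt⟩ : ∃ p : ℕ × ℕ, p = (Ms.1, Mb.2) := ⟨_, rfl⟩
          have hv1' : virt.1 = Ms.1 := by rw [hvirt]
          have hv2' : virt.2 = Mb.2 := by rw [hvirt]
          have hvirtM : virt ∉ M := by
            intro h
            exact hsne (((congrArg Prod.snd (hM.eq_of_fst hMsM h hv1')).symm.trans hv2').symm)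
          have hsubM : (M.erase Mb).erase Ms ⊆ M :=
            (Finset.erase_subset _ _).trans (Finset.erase_subset _ _)
          have hM'' : IsM B (S₁ ∪ S₂) (insert virt ((M.erase Mb).erase Ms)) := by
            refine (hM.subset hsubM).insert' (by rw [hv1']; exact (hM.1 Ms hMsM).1)
              (by rw [hv2']; exact (hM.1 Mb hMbM).2) ?_ ?_
            · intro f hf h'
              exact (Finset.ne_of_mem_erase hf)
                (hM.eq_of_fst hMsM (hsubM hf) (h'.trans hv1'))
            · intro f hf h'
              exact (Finset.ne_of_mem_erase (Finset.mem_of_mem_erase hf))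
                (hM.eq_of_snd hMbM (hsubM hf) (h'.trans hv2'))
          obtain ⟨M₁, M₂, h₁, h₂, hu, hi⟩ := ih N' (insert virt ((M.erase Mb).erase Ms))
            hcN' hM'' hN'
          have keyA : ∀ f ∈ M₁ ∪ M₂, f.1 ≠ e.1 ∧ f.2 ≠ e.2 := by
            intro f hf
            rw [hu] at hf
            rcases Finset.mem_union.1 hf with hf | hf
            · rcases Finset.mem_insert.1 hf with hfv | hf
              · rw [hfv, hvirt]
                exact ⟨hMs1ne, hMb2ne⟩
              · constructor
                · intro h'
                  exact (Finset.ne_of_mem_erase (Finset.mem_of_mem_erase hf))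
                    (hM.eq_of_fst hMbM (hsubM hf) (h'.trans hMb1.symm))
                · intro h'
                  exact (Finset.ne_of_mem_erase hf)
                    (hM.eq_of_snd hMsM (hsubM hf) (h'.trans hMs2.symm))
            · exact ⟨keyN1 f hf, keyN2 f hf⟩
          have hMbU : Mb ∉ M₁ ∪ M₂ := by
            intro h
            rw [hu] at h
            rcases Finset.mem_union.1 h with h | h
            · rcases Finset.mem_insert.1 h with h | h
              · exact hbne ((congrArg Prod.fst h).trans hv1')
              · exact (Finset.ne_of_mem_erase (Finset.mem_of_mem_erase h)) rfl
            · exact hMbNn (Finset.mem_of_mem_erase h)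
          have hMsU : Ms ∉ M₁ ∪ M₂ := by
            intro h
            rw [hu] at h
            rcases Finset.mem_union.1 h with h | h
            · rcases Finset.mem_insert.1 h with h | h
              · exact hsne (((congrArg Prod.snd h).trans hv2').symm)
              · exact (Finset.ne_of_mem_erase h) rfl
            · exact hMsNn (Finset.mem_of_mem_erase h)
          have heU : e ∉ M₁ ∪ M₂ := fun h => (keyA e h).1 rfl
          have hvirtU : virt ∈ M₁ ∪ M₂ := by
            rw [hu]
            exact Finset.mem_union_left _ (Finset.mem_insert_self _ _)
          have hvirtNin : virt ∈ M₁ ∩ M₂ ↔ virt ∈ N' := by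
            rw [hi]
            constructor
            · intro h
              exact (Finset.mem_inter.1 h).2
            · intro h
              exact Finset.mem_inter.2 ⟨Finset.mem_insert_self _ _, h⟩
          have fin : ∀ (T₁ T₂ : Finset ℕ) (P Q : Finset (ℕ × ℕ)),
              IsM B T₁ P → IsM B T₂ Q → e.2 ∈ T₁ → e.2 ∈ T₂ → virt ∈ P →
              P ∪ Q = M₁ ∪ M₂ → P ∩ Q = M₁ ∩ M₂ →
              ∃ P' Q', IsM B T₁ P' ∧ IsM B T₂ Q' ∧
                P' ∪ Q' = M ∪ N ∧ P' ∩ Q' = M ∩ N := by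
            intro T₁ T₂ P Q hP hQ hT₁ hT₂ hvP hPQu hPQi
            have hMb2T : Mb.2 ∈ T₁ := by rw [← hv2']; exact (hP.1 virt hvP).2
            have hPsub : ∀ f ∈ P, f ∈ M₁ ∪ M₂ := fun f hf =>
              hPQu ▸ Finset.mem_union_left _ hf
            have hQsub : ∀ f ∈ Q, f ∈ M₁ ∪ M₂ := fun f hf =>
              hPQu ▸ Finset.mem_union_right _ hf
            have base : IsM B T₁ (P.erase virt) := hP.subset (Finset.erase_subset _ _)
            have step1 : IsM B T₁ (insert Ms (P.erase virt)) := by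
              refine base.insert' (hM.1 Ms hMsM).1 (by rw [hMs2]; exact hT₁) ?_ ?_
              · intro f hf h'
                exact (Finset.ne_of_mem_erase hf)
                  (hP.eq_of_fst hvP (Finset.mem_of_mem_erase hf) (h'.trans hv1'.symm))
              · intro f hf h'
                exact (keyA f (hPsub f (Finset.mem_of_mem_erase hf))).2 (h'.trans hMs2)
            have step2 : IsM B T₁ (insert Mb (insert Ms (P.erase virt))) := by
              refine step1.insert' (by rw [hMb1]; exact heB) hMb2T ?_ ?_
              · intro f hf h'
                rcases Finset.mem_insert.1 hf with rfl | hf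
                · exact hbne h'.symm
                · exact (keyA f (hPsub f (Finset.mem_of_mem_erase hf))).1 (h'.trans hMb1)
              · intro f hf h'
                rcases Finset.mem_insert.1 hf with rfl | hf
                · exact hsne h'.symm
                · exact (Finset.ne_of_mem_erase hf)
                    (hP.eq_of_snd hvP (Finset.mem_of_mem_erase hf) (h'.trans hv2'.symm))
            have hQ' : IsM B T₂ (insert e Q) := hQ.insert' heB hT₂
              (fun f hf => (keyA f (hQsub f hf)).1) (fun f hf => (keyA f (hQsub f hf)).2)
            refine ⟨insert Mb (insert Ms (P.erase virt)), insert e Q, step2, hQ', ?_, ?_⟩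
            · -- union
              ext x
              simp only [Finset.mem_union, Finset.mem_insert, Finset.mem_erase]
              constructor
              · rintro ((rfl | rfl | ⟨hxv, hxP⟩) | (rfl | hxQ))
                · exact Or.inl hMbM
                · exact Or.inl hMsM
                · have hxU : x ∈ M₁ ∪ M₂ := hPsub x hxP
                  rw [hu] at hxU
                  rcases Finset.mem_union.1 hxU with h | h
                  · rcases Finset.mem_insert.1 h with h | h
                    · exact absurd h hxv
                    · exact Or.inl (hsubM h)
                  · exact Or.inr (Finset.mem_of_mem_erase h)
                · exact Or.inr he
                · have hxU : x ∈ M₁ ∪ M₂ := hQsub x hxQ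
                  rw [hu] at hxU
                  rcases Finset.mem_union.1 hxU with h | h
                  · rcases Finset.mem_insert.1 h with h | h
                    · subst h
                      have : x ∈ M₁ ∩ M₂ := by
                        rw [← hPQi]
                        exact Finset.mem_inter.2 ⟨hvP, hxQ⟩
                      exact Or.inr (Finset.mem_of_mem_erase (hvirtNin.1 this))
                    · exact Or.inl (hsubM h)
                  · exact Or.inr (Finset.mem_of_mem_erase h)
              · rintro (hxM | hxN)
                · by_cases hxMb : x = Mb
                  · exact Or.inl (Or.inl hxMb)
                  · by_cases hxMs : x = Ms
                    · exact Or.inl (Or.inr (Or.inl hxMs))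
                    · have hxv : x ≠ virt := fun h => hvirtM (h ▸ hxM)
                      have hxU : x ∈ M₁ ∪ M₂ := by
                        rw [hu]
                        exact Finset.mem_union_left _ (Finset.mem_insert_of_mem
                          (Finset.mem_erase.2 ⟨hxMs, Finset.mem_erase.2 ⟨hxMb, hxM⟩⟩))
                      rw [← hPQu] at hxU
                      rcases Finset.mem_union.1 hxU with h | h
                      · exact Or.inl (Or.inr (Or.inr ⟨hxv, h⟩))
                      · exact Or.inr (Or.inr h)
                · by_cases hxe : x = e
                  · exact Or.inr (Or.inl hxe)
                  · have hxN' : x ∈ N' := Finset.mem_erase.2 ⟨hxe, hxN⟩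
                    by_cases hxv : x = virt
                    · subst hxv
                      have : x ∈ P ∩ Q := by
                        rw [hPQi]
                        exact hvirtNin.2 hxN'
                      exact Or.inr (Or.inr (Finset.mem_inter.1 this).2)
                    · have hxU : x ∈ P ∪ Q := by
                        rw [hPQu, hu]
                        exact Finset.mem_union_right _ hxN'
                      rcases Finset.mem_union.1 hxU with h | h
                      · exact Or.inl (Or.inr (Or.inr ⟨hxv, h⟩))
                      · exact Or.inr (Or.inr h)
            · -- intersection
              ext x
              simp only [Finset.mem_inter, Finset.mem_insert, Finset.mem_erase]
              constructor
              · rintro ⟨h1, (rfl | hxQ)⟩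
                · exfalso
                  rcases h1 with rfl | rfl | ⟨hxv, hxP⟩
                  · exact heM hMbM
                  · exact heM hMsM
                  · exact heU (hPsub x hxP)
                · rcases h1 with rfl | rfl | ⟨hxv, hxP⟩
                  · exact absurd (hQsub x hxQ) hMbU
                  · exact absurd (hQsub x hxQ) hMsU
                  · have hin : x ∈ M₁ ∩ M₂ := by
                      rw [← hPQi]
                      exact Finset.mem_inter.2 ⟨hxP, hxQ⟩
                    rw [hi] at hin
                    have h2 := Finset.mem_inter.1 hin
                    rcases Finset.mem_insert.1 h2.1 with h | h
                    · exact absurd h hxv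
                    · exact ⟨hsubM h, Finset.mem_of_mem_erase h2.2⟩
              · rintro ⟨hxM, hxN⟩
                have hxMb : x ≠ Mb := fun h => hMbNn (h ▸ hxN)
                have hxMs : x ≠ Ms := fun h => hMsNn (h ▸ hxN)
                have hxe : x ≠ e := fun h => heM (h ▸ hxM)
                have hxv : x ≠ virt := fun h => hvirtM (h ▸ hxM)
                have hin : x ∈ M₁ ∩ M₂ := by
                  rw [hi]
                  exact Finset.mem_inter.2 ⟨Finset.mem_insert_of_mem
                    (Finset.mem_erase.2 ⟨hxMs, Finset.mem_erase.2 ⟨hxMb, hxM⟩⟩),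
                    Finset.mem_erase.2 ⟨hxe, hxN⟩⟩
                rw [← hPQi] at hin
                have h2 := Finset.mem_inter.1 hin
                exact ⟨Or.inr (Or.inr ⟨hxv, h2.1⟩), Or.inr h2.2⟩
          by_cases hv1 : virt ∈ M₁
          · exact fin S₁ S₂ M₁ M₂ h₁ h₂ heS1 heS2 hv1 rfl rfl
          · have hv2 : virt ∈ M₂ := by
              rcases Finset.mem_union.1 hvirtU with h | h
              · exact absurd h hv1
              · exact h
            obtain ⟨P', Q', hP', hQ', huu, hii⟩ := fin S₂ S₁ M₂ M₁ h₂ h₁ heS2 heS1 hv2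
              (Finset.union_comm _ _) (Finset.inter_comm _ _)
            exact ⟨Q', P', hQ', hP', (Finset.union_comm _ _).trans huu,
              (Finset.inter_comm _ _).trans hii⟩
        · -- case 2 : only a buyer conflict Mb
          obtain ⟨Mb, hMbM, hMb1⟩ := hb
          obtain ⟨M₁, M₂, h₁, h₂, hu, hi⟩ := ih N' M hcN' hM hN'
          have hMbN : Mb ∉ N := fun h => heM ((hN.eq_of_fst he h hMb1) ▸ hMbM)
          have key2 : ∀ f ∈ M₁ ∪ M₂, f.2 ≠ e.2 := by
            intro f hf h'
            rw [hu] at hf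
            rcases Finset.mem_union.1 hf with hf | hf
            · exact hs ⟨f, hf, h'⟩
            · exact keyN2 f hf h'
          have key1 : ∀ f ∈ M₁ ∪ M₂, f.1 = e.1 → f = Mb := by
            intro f hf h'
            rw [hu] at hf
            rcases Finset.mem_union.1 hf with hf | hf
            · exact hM.eq_of_fst hMbM hf (h'.trans hMb1.symm)
            · exact absurd h' (keyN1 f hf)
          have heU : e ∉ M₁ ∪ M₂ := by
            intro h
            exact heM ((key1 e h rfl) ▸ hMbM)
          have fin : ∀ (T₁ T₂ : Finset ℕ) (P Q : Finset (ℕ × ℕ)),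
              IsM B T₁ P → IsM B T₂ Q → e.2 ∈ T₂ → Mb ∈ P →
              P ∪ Q = M₁ ∪ M₂ → P ∩ Q = M₁ ∩ M₂ →
              ∃ P' Q', IsM B T₁ P' ∧ IsM B T₂ Q' ∧
                P' ∪ Q' = M ∪ N ∧ P' ∩ Q' = M ∩ N := by
            intro T₁ T₂ P Q hP hQ hT₂ hMbP hPQu hPQi
            refine ⟨P, insert e Q, hP, hQ.insert' heB hT₂ ?_ ?_, ?_, ?_⟩
            · intro f hf h'
              have hfU : f ∈ M₁ ∪ M₂ := hPQu ▸ Finset.mem_union_right _ hf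
              have hfMb : f = Mb := key1 f hfU h'
              subst hfMb
              have hin : f ∈ P ∩ Q := Finset.mem_inter.2 ⟨hMbP, hf⟩
              rw [hPQi, hi] at hin
              exact hMbN (Finset.mem_of_mem_erase (Finset.mem_inter.1 hin).2)
            · intro f hf
              exact key2 f (hPQu ▸ Finset.mem_union_right _ hf)
            · rw [Finset.union_insert, hPQu, hu, hN'def, ← Finset.union_insert,
                Finset.insert_erase he]
            · rw [Finset.inter_insert_of_notMem
                (fun h => heU (hPQu ▸ Finset.mem_union_left _ h)), hPQi, hi, hMN']
          by_cases hMb₁ : Mb ∈ M₁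
          · exact fin S₁ S₂ M₁ M₂ h₁ h₂ heS2 hMb₁ rfl rfl
          · have hMb₂ : Mb ∈ M₂ := by
              have hMbU : Mb ∈ M₁ ∪ M₂ := by
                rw [hu]; exact Finset.mem_union_left _ hMbM
              rcases Finset.mem_union.1 hMbU with h | h
              · exact absurd h hMb₁
              · exact h
            obtain ⟨P', Q', hP', hQ', huu, hii⟩ := fin S₂ S₁ M₂ M₁ h₂ h₁ heS1 hMb₂
              (Finset.union_comm _ _) (Finset.inter_comm _ _)
            exact ⟨Q', P', hQ', hP', (Finset.union_comm _ _).trans huu,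
              (Finset.inter_comm _ _).trans hii⟩
      · by_cases hs : ∃ f ∈ M, f.2 = e.2
        · -- case 3 : only a seller conflict Ms
          obtain ⟨Ms, hMsM, hMs2⟩ := hs
          obtain ⟨M₁, M₂, h₁, h₂, hu, hi⟩ := ih N' M hcN' hM hN'
          have hMsN : Ms ∉ N := fun h => heM ((hN.eq_of_snd he h hMs2) ▸ hMsM)
          have key1 : ∀ f ∈ M₁ ∪ M₂, f.1 ≠ e.1 := by
            intro f hf h'
            rw [hu] at hf
            rcases Finset.mem_union.1 hf with hf | hf
            · exact hb ⟨f, hf, h'⟩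
            · exact keyN1 f hf h'
          have key2 : ∀ f ∈ M₁ ∪ M₂, f.2 = e.2 → f = Ms := by
            intro f hf h'
            rw [hu] at hf
            rcases Finset.mem_union.1 hf with hf | hf
            · exact hM.eq_of_snd hMsM hf (h'.trans hMs2.symm)
            · exact absurd h' (keyN2 f hf)
          have heU : e ∉ M₁ ∪ M₂ := fun h => key1 e h rfl
          have fin : ∀ (T₁ T₂ : Finset ℕ) (P Q : Finset (ℕ × ℕ)),
              IsM B T₁ P → IsM B T₂ Q → e.2 ∈ T₂ → Ms ∈ P →
              P ∪ Q = M₁ ∪ M₂ → P ∩ Q = M₁ ∩ M₂ →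
              ∃ P' Q', IsM B T₁ P' ∧ IsM B T₂ Q' ∧
                P' ∪ Q' = M ∪ N ∧ P' ∩ Q' = M ∩ N := by
            intro T₁ T₂ P Q hP hQ hT₂ hMsP hPQu hPQi
            refine ⟨P, insert e Q, hP, hQ.insert' heB hT₂ ?_ ?_, ?_, ?_⟩
            · intro f hf
              exact key1 f (hPQu ▸ Finset.mem_union_right _ hf)
            · intro f hf h'
              have hfU : f ∈ M₁ ∪ M₂ := hPQu ▸ Finset.mem_union_right _ hf
              have hfMs : f = Ms := key2 f hfU h'
              subst hfMs
              have hin : f ∈ P ∩ Q := Finset.mem_inter.2 ⟨hMsP, hf⟩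
              rw [hPQi, hi] at hin
              exact hMsN (Finset.mem_of_mem_erase (Finset.mem_inter.1 hin).2)
            · rw [Finset.union_insert, hPQu, hu, hN'def, ← Finset.union_insert,
                Finset.insert_erase he]
            · rw [Finset.inter_insert_of_notMem
                (fun h => heU (hPQu ▸ Finset.mem_union_left _ h)), hPQi, hi, hMN']
          by_cases hMs₁ : Ms ∈ M₁
          · exact fin S₁ S₂ M₁ M₂ h₁ h₂ heS2 hMs₁ rfl rfl
          · have hMs₂ : Ms ∈ M₂ := by
              have hMsU : Ms ∈ M₁ ∪ M₂ := by
                rw [hu]; exact Finset.mem_union_left _ hMsM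
              rcases Finset.mem_union.1 hMsU with h | h
              · exact absurd h hMs₁
              · exact h
            obtain ⟨P', Q', hP', hQ', huu, hii⟩ := fin S₂ S₁ M₂ M₁ h₂ h₁ heS1 hMs₂
              (Finset.union_comm _ _) (Finset.inter_comm _ _)
            exact ⟨Q', P', hQ', hP', (Finset.union_comm _ _).trans huu,
              (Finset.inter_comm _ _).trans hii⟩
        · -- case 1 : no conflicts, put e in M₁
          obtain ⟨M₁, M₂, h₁, h₂, hu, hi⟩ := ih N' M hcN' hM hN'
          have key1 : ∀ f ∈ M₁ ∪ M₂, f.1 ≠ e.1 := by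
            intro f hf h'
            rw [hu] at hf
            rcases Finset.mem_union.1 hf with hf | hf
            · exact hb ⟨f, hf, h'⟩
            · exact keyN1 f hf h'
          have key2 : ∀ f ∈ M₁ ∪ M₂, f.2 ≠ e.2 := by
            intro f hf h'
            rw [hu] at hf
            rcases Finset.mem_union.1 hf with hf | hf
            · exact hs ⟨f, hf, h'⟩
            · exact keyN2 f hf h'
          refine ⟨insert e M₁, M₂,
            h₁.insert' heB heS1 (fun f hf => key1 f (Finset.mem_union_left _ hf))
              (fun f hf => key2 f (Finset.mem_union_left _ hf)), h₂, ?_, ?_⟩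
          · rw [Finset.insert_union, hu, hN'def, ← Finset.union_insert,
              Finset.insert_erase he]
          · rw [Finset.insert_inter_of_notMem
              (fun h => key1 e (Finset.mem_union_right _ h) rfl), hi, hMN']

lemma isMatching_isM {B S : Finset ℕ} {g : ℕ → ℕ → Prop} {M : Finset (ℕ × ℕ)}
    (h : IsMatching B S g M) : IsM B S M :=
  ⟨fun e he => ⟨(h.1 e he).1, (h.1 e he).2.1⟩, h.2⟩

lemma isM_isMatching {B S : Finset ℕ} {g : ℕ → ℕ → Prop} {M : Finset (ℕ × ℕ)}
    (h : IsM B S M) (hg : ∀ e ∈ M, g e.1 e.2) : IsMatching B S g M :=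
  ⟨fun e he => ⟨(h.1 e he).1, (h.1 e he).2, hg e he⟩, h.2⟩

lemma W_set_nonempty (B S : Finset ℕ) (g : ℕ → ℕ → Prop) (v : ℕ → ℕ → ℝ) :
    Set.Nonempty {x | ∃ M : Finset (ℕ × ℕ), IsMatching B S g M ∧ x = ∑ e ∈ M, v e.1 e.2} :=
  ⟨0, ∅, ⟨fun e he => absurd he (Finset.notMem_empty e),
    fun e he => absurd he (Finset.notMem_empty e)⟩, Finset.sum_empty.symm⟩

lemma W_set_bdd (B S : Finset ℕ) (g : ℕ → ℕ → Prop) (v : ℕ → ℕ → ℝ)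
    (hv : ∀ i j, 0 ≤ v i j) :
    BddAbove {x | ∃ M : Finset (ℕ × ℕ), IsMatching B S g M ∧ x = ∑ e ∈ M, v e.1 e.2} := by
  refine ⟨∑ e ∈ B ×ˢ S, v e.1 e.2, ?_⟩
  rintro x ⟨M, hM, rfl⟩
  apply Finset.sum_le_sum_of_subset_of_nonneg
  · intro f hf
    exact Finset.mem_product.2 ⟨(hM.1 f hf).1, (hM.1 f hf).2.1⟩
  · intro f _ _
    exact hv f.1 f.2

lemma W_le {B S : Finset ℕ} {g : ℕ → ℕ → Prop} {v : ℕ → ℕ → ℝ} {a : ℝ}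
    (h : ∀ M : Finset (ℕ × ℕ), IsMatching B S g M → ∑ e ∈ M, v e.1 e.2 ≤ a) :
    W B S g v ≤ a := by
  unfold W
  apply csSup_le (W_set_nonempty B S g v)
  rintro x ⟨M, hM, rfl⟩
  exact h M hM

lemma le_W {B S : Finset ℕ} {g : ℕ → ℕ → Prop} {v : ℕ → ℕ → ℝ} {M : Finset (ℕ × ℕ)}
    (hv : ∀ i j, 0 ≤ v i j) (hM : IsMatching B S g M) :
    ∑ e ∈ M, v e.1 e.2 ≤ W B S g v := by
  unfold W
  exact le_csSup (W_set_bdd B S g v hv) ⟨M, hM, rfl⟩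

/-- For any two finite sets of sellers `S₁` and `S₂`, the maximum-weight bipartite matching
value satisfies `W S₁ + W S₂ ≥ W (S₁ ∪ S₂) + W (S₁ ∩ S₂)`. -/
theorem max_matching_submodular_union_inter (B : Finset ℕ) (g : ℕ → ℕ → Prop)
    (v : ℕ → ℕ → ℝ) (hv : ∀ i j, 0 ≤ v i j) (S₁ S₂ : Finset ℕ) :
    W B (S₁ ∪ S₂) g v + W B (S₁ ∩ S₂) g v ≤ W B S₁ g v + W B S₂ g v := by
  classical
  have h1 : W B (S₁ ∪ S₂) g v ≤ W B S₁ g v + W B S₂ g v - W B (S₁ ∩ S₂) g v := by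
    refine W_le fun M hM => ?_
    have h2 : W B (S₁ ∩ S₂) g v ≤ W B S₁ g v + W B S₂ g v - ∑ e ∈ M, v e.1 e.2 := by
      refine W_le fun N hN => ?_
      obtain ⟨M₁, M₂, h₁, h₂, hu, hi⟩ :=
        split B S₁ S₂ N.card N M rfl (isMatching_isM hM) (isMatching_isM hN)
      have hgMN : ∀ f ∈ M ∪ N, g f.1 f.2 := by
        intro f hf
        rcases Finset.mem_union.1 hf with h | h
        · exact (hM.1 f h).2.2
        · exact (hN.1 f h).2.2
      have hg1 : ∀ f ∈ M₁, g f.1 f.2 := fun f hf =>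
        hgMN f (hu ▸ Finset.mem_union_left _ hf)
      have hg2 : ∀ f ∈ M₂, g f.1 f.2 := fun f hf =>
        hgMN f (hu ▸ Finset.mem_union_right _ hf)
      have hW1 : ∑ e ∈ M₁, v e.1 e.2 ≤ W B S₁ g v := le_W hv (isM_isMatching h₁ hg1)
      have hW2 : ∑ e ∈ M₂, v e.1 e.2 ≤ W B S₂ g v := le_W hv (isM_isMatching h₂ hg2)
      have hsum : ∑ e ∈ M, v e.1 e.2 + ∑ e ∈ N, v e.1 e.2 =
          ∑ e ∈ M₁, v e.1 e.2 + ∑ e ∈ M₂, v e.1 e.2 := by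
        calc ∑ e ∈ M, v e.1 e.2 + ∑ e ∈ N, v e.1 e.2
            = ∑ e ∈ M ∪ N, v e.1 e.2 + ∑ e ∈ M ∩ N, v e.1 e.2 :=
              (Finset.sum_union_inter).symm
          _ = ∑ e ∈ M₁ ∪ M₂, v e.1 e.2 + ∑ e ∈ M₁ ∩ M₂, v e.1 e.2 := by rw [hu, hi]
          _ = ∑ e ∈ M₁, v e.1 e.2 + ∑ e ∈ M₂, v e.1 e.2 := Finset.sum_union_inter
      linarith
    linarith
  linarith
end

section
/- If (p₁, a) and (p₂, a) are competitive equilibria of a unit-demand buyer-seller market, then so are (p₁ ∨ p₂, a) and (p₁ ∧ p₂, a), where ∨ and ∧ denote coordinate-wise maximum and minimum. Consequently there exist minimum and maximum competitive price vectors. -/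
open Finset
open scoped Classical

/-- The utility of buyer `i` under prices `p` and allocation `a`: the value minus price of
the item allocated to `i` (zero if `i` receives nothing). -/
noncomputable def util (v : ℕ → ℕ → ℝ) (p : ℕ → ℝ) (a : Finset (ℕ × ℕ)) (i : ℕ) : ℝ :=
  ∑ e ∈ a.filter (fun e => e.1 = i), (v e.1 e.2 - p e.2)

/-- Competitive equilibrium of the unit-demand buyer-seller market `(B, S, g, v)`:
the allocation is a matching along edges of `g`, prices are nonnegative, every buyer has
nonnegative utility and receives a most-preferred outcome among accessible items,
and unassigned goods have price zero. -/
noncomputable def IsCE (B S : Finset ℕ) (g : ℕ → ℕ → Prop) (v : ℕ → ℕ → ℝ)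
    (p : ℕ → ℝ) (a : Finset (ℕ × ℕ)) : Prop :=
  IsMatching B S g a ∧
  (∀ j, 0 ≤ p j) ∧
  (∀ i ∈ B, 0 ≤ util v p a i) ∧
  (∀ i ∈ B, ∀ j ∈ S, g i j → v i j - p j ≤ util v p a i) ∧
  (∀ j ∈ S, (∀ i, (i, j) ∉ a) → p j = 0)

lemma util_matched {B S : Finset ℕ} {g : ℕ → ℕ → Prop} {a : Finset (ℕ × ℕ)}
    (hM : IsMatching B S g a) (v : ℕ → ℕ → ℝ) (p : ℕ → ℝ) {i j : ℕ} (h : (i, j) ∈ a) :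
    util v p a i = v i j - p j := by
  have hfe : a.filter (fun e => e.1 = i) = {(i, j)} := by
    ext e
    simp only [mem_filter, mem_singleton]
    constructor
    · rintro ⟨he, hei⟩
      by_contra hne
      exact (hM.2 e he (i, j) h hne).1 hei
    · rintro rfl; exact ⟨h, rfl⟩
  rw [util, hfe, sum_singleton]

lemma util_unmatched (v : ℕ → ℕ → ℝ) (p : ℕ → ℝ) {a : Finset (ℕ × ℕ)} {i : ℕ}
    (h : ∀ j, (i, j) ∉ a) : util v p a i = 0 := by
  rw [util, filter_eq_empty_iff.mpr, sum_empty]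
  rintro ⟨i', j⟩ he rfl
  exact h j he

lemma sum_util_eq {B S : Finset ℕ} {g : ℕ → ℕ → Prop} {a : Finset (ℕ × ℕ)}
    (hM : IsMatching B S g a) (v : ℕ → ℕ → ℝ) (p : ℕ → ℝ) :
    ∑ i ∈ B, util v p a i = ∑ e ∈ a, (v e.1 e.2 - p e.2) := by
  unfold util
  exact sum_fiberwise_of_maps_to (fun e he => (hM.1 e he).1) _

lemma sum_price_eq {B S : Finset ℕ} {g : ℕ → ℕ → Prop} {a : Finset (ℕ × ℕ)}
    (hM : IsMatching B S g a) (p : ℕ → ℝ) :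
    ∑ e ∈ a, p e.2 = ∑ j ∈ S.filter (fun j => ∃ i, (i, j) ∈ a), p j := by
  have himg : a.image Prod.snd = S.filter (fun j => ∃ i, (i, j) ∈ a) := by
    ext j
    simp only [mem_image, mem_filter]
    constructor
    · rintro ⟨e, he, rfl⟩
      exact ⟨(hM.1 e he).2.1, e.1, by simpa using he⟩
    · rintro ⟨-, i, hi⟩
      exact ⟨(i, j), hi, rfl⟩
  rw [← himg, sum_image]
  intro x hx y hy hxy
  by_contra hne
  exact (hM.2 x hx y hy hne).2 hxy

lemma util_le_util {B S : Finset ℕ} {g : ℕ → ℕ → Prop} {v : ℕ → ℕ → ℝ}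
    {p₁ : ℕ → ℝ} {a₁ a₂ : Finset (ℕ × ℕ)} (h₁ : IsCE B S g v p₁ a₁)
    (hM₂ : IsMatching B S g a₂) {i : ℕ} (hi : i ∈ B) :
    util v p₁ a₂ i ≤ util v p₁ a₁ i := by
  by_cases h : ∃ j, (i, j) ∈ a₂
  · obtain ⟨j, hj⟩ := h
    rw [util_matched hM₂ v p₁ hj]
    exact h₁.2.2.2.1 i hi j (hM₂.1 _ hj).2.1 (hM₂.1 _ hj).2.2
  · push_neg at h
    rw [util_unmatched v p₁ h]
    exact h₁.2.2.1 i hi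

lemma price_sum_split {B S : Finset ℕ} {g : ℕ → ℕ → Prop} {v : ℕ → ℕ → ℝ}
    {p : ℕ → ℝ} {a a' : Finset (ℕ × ℕ)} (h : IsCE B S g v p a)
    (hM' : IsMatching B S g a') :
    ∑ e ∈ a', p e.2 ≤ ∑ j ∈ S, p j ∧ ∑ e ∈ a, p e.2 = ∑ j ∈ S, p j := by
  constructor
  · rw [sum_price_eq hM' p]
    exact sum_le_sum_of_subset_of_nonneg (filter_subset _ _) (fun j _ _ => h.2.1 j)
  · rw [sum_price_eq h.1 p]
    rw [← sum_filter_add_sum_filter_not S (fun j => ∃ i, (i, j) ∈ a) p]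
    have : ∑ j ∈ S.filter (fun j => ¬∃ i, (i, j) ∈ a), p j = 0 := by
      refine sum_eq_zero fun j hj => ?_
      simp only [mem_filter, not_exists] at hj
      exact h.2.2.2.2 j hj.1 hj.2
    rw [this, add_zero]

lemma total_le {B S : Finset ℕ} {g : ℕ → ℕ → Prop} {v : ℕ → ℕ → ℝ}
    {p₁ : ℕ → ℝ} {a₁ a₂ : Finset (ℕ × ℕ)} (h₁ : IsCE B S g v p₁ a₁)
    (hM₂ : IsMatching B S g a₂) :
    ∑ e ∈ a₂, v e.1 e.2 ≤ ∑ e ∈ a₁, v e.1 e.2 := by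
  have hs₂ := sum_util_eq (B := B) hM₂ v p₁
  have hs₁ := sum_util_eq (B := B) h₁.1 v p₁
  rw [sum_sub_distrib] at hs₂ hs₁
  have hle : ∑ i ∈ B, util v p₁ a₂ i ≤ ∑ i ∈ B, util v p₁ a₁ i :=
    sum_le_sum fun i hi => util_le_util h₁ hM₂ hi
  obtain ⟨hP₂, hP₁⟩ := price_sum_split h₁ hM₂
  linarith

lemma interchange {B S : Finset ℕ} {g : ℕ → ℕ → Prop} {v : ℕ → ℕ → ℝ}
    {p₁ p₂ : ℕ → ℝ} {a₁ a₂ : Finset (ℕ × ℕ)}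
    (h₁ : IsCE B S g v p₁ a₁) (h₂ : IsCE B S g v p₂ a₂) :
    IsCE B S g v p₁ a₂ := by
  have hM₁ := h₁.1
  have hM₂ := h₂.1
  have hT : ∑ e ∈ a₁, v e.1 e.2 = ∑ e ∈ a₂, v e.1 e.2 :=
    le_antisymm (total_le h₂ hM₁) (total_le h₁ hM₂)
  obtain ⟨hP₂, hP₁⟩ := price_sum_split h₁ hM₂
  have hs₂ := sum_util_eq (B := B) hM₂ v p₁
  have hs₁ := sum_util_eq (B := B) hM₁ v p₁
  rw [sum_sub_distrib] at hs₂ hs₁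
  have hle : ∀ i ∈ B, util v p₁ a₂ i ≤ util v p₁ a₁ i :=
    fun i hi => util_le_util h₁ hM₂ hi
  have hsum_ge : ∑ i ∈ B, util v p₁ a₁ i ≤ ∑ i ∈ B, util v p₁ a₂ i := by linarith
  have hsum_eq : ∑ i ∈ B, util v p₁ a₂ i = ∑ i ∈ B, util v p₁ a₁ i :=
    le_antisymm (sum_le_sum hle) hsum_ge
  have heq : ∀ i ∈ B, util v p₁ a₂ i = util v p₁ a₁ i :=
    fun i hi => ((sum_eq_sum_iff_of_le hle).mp hsum_eq i hi)
  -- unsold goods in a₂ have price zero under p₁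
  have hPeq : ∑ e ∈ a₂, p₁ e.2 = ∑ j ∈ S, p₁ j := by linarith
  have hzero : ∀ j ∈ S, (∀ i, (i, j) ∉ a₂) → p₁ j = 0 := by
    intro j hj hns
    have hsplit := sum_filter_add_sum_filter_not S (fun j => ∃ i, (i, j) ∈ a₂) p₁
    rw [sum_price_eq hM₂ p₁] at hPeq
    have hzsum : ∑ j ∈ S.filter (fun j => ¬∃ i, (i, j) ∈ a₂), p₁ j = 0 := by linarith
    have := (sum_eq_zero_iff_of_nonneg (fun j _ => h₁.2.1 j)).mp hzsum j
      (mem_filter.mpr ⟨hj, by push_neg; exact hns⟩)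
    exact this
  refine ⟨hM₂, h₁.2.1, ?_, ?_, hzero⟩
  · intro i hi
    rw [heq i hi]; exact h₁.2.2.1 i hi
  · intro i hi j hj hg
    rw [heq i hi]; exact h₁.2.2.2.1 i hi j hj hg

lemma ce_max {B S : Finset ℕ} {g : ℕ → ℕ → Prop} {v : ℕ → ℕ → ℝ}
    {p₁ p₂ : ℕ → ℝ} {a : Finset (ℕ × ℕ)}
    (h₁ : IsCE B S g v p₁ a) (h₂ : IsCE B S g v p₂ a) :
    IsCE B S g v (fun j => max (p₁ j) (p₂ j)) a := by
  obtain ⟨hM, hnn₁, hu₁, hbr₁, hz₁⟩ := h₁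
  obtain ⟨-, hnn₂, hu₂, hbr₂, hz₂⟩ := h₂
  refine ⟨hM, fun j => le_trans (hnn₁ j) (le_max_left _ _), ?_, ?_, ?_⟩
  · intro i hi
    by_cases h : ∃ j, (i, j) ∈ a
    · obtain ⟨j, hj⟩ := h
      rw [util_matched hM v _ hj]
      have e₁ := util_matched hM v p₁ hj
      have e₂ := util_matched hM v p₂ hj
      have u₁ := hu₁ i hi; have u₂ := hu₂ i hi
      have : max (p₁ j) (p₂ j) ≤ v i j := max_le (by linarith) (by linarith)
      simpa using sub_nonneg.mpr this
    · push_neg at h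
      rw [util_unmatched v _ h]
  · intro i hi j' hj' hg
    have b₁ := hbr₁ i hi j' hj' hg
    have b₂ := hbr₂ i hi j' hj' hg
    have m₁ := le_max_left (p₁ j') (p₂ j')
    have m₂ := le_max_right (p₁ j') (p₂ j')
    by_cases h : ∃ j, (i, j) ∈ a
    · obtain ⟨j, hj⟩ := h
      rw [util_matched hM v _ hj]
      rw [util_matched hM v p₁ hj] at b₁
      rw [util_matched hM v p₂ hj] at b₂
      show v i j' - max (p₁ j') (p₂ j') ≤ v i j - max (p₁ j) (p₂ j)
      rcases max_choice (p₁ j) (p₂ j) with h | h <;> rw [h] <;> linarith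
    · push_neg at h
      rw [util_unmatched v _ h]
      rw [util_unmatched v p₁ h] at b₁
      show v i j' - max (p₁ j') (p₂ j') ≤ 0
      linarith
  · intro j hj hns
    show max (p₁ j) (p₂ j) = 0
    rw [hz₁ j hj hns, hz₂ j hj hns, max_self]

lemma ce_min {B S : Finset ℕ} {g : ℕ → ℕ → Prop} {v : ℕ → ℕ → ℝ}
    {p₁ p₂ : ℕ → ℝ} {a : Finset (ℕ × ℕ)}
    (h₁ : IsCE B S g v p₁ a) (h₂ : IsCE B S g v p₂ a) :
    IsCE B S g v (fun j => min (p₁ j) (p₂ j)) a := by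
  obtain ⟨hM, hnn₁, hu₁, hbr₁, hz₁⟩ := h₁
  obtain ⟨-, hnn₂, hu₂, hbr₂, hz₂⟩ := h₂
  refine ⟨hM, fun j => le_min (hnn₁ j) (hnn₂ j), ?_, ?_, ?_⟩
  · intro i hi
    by_cases h : ∃ j, (i, j) ∈ a
    · obtain ⟨j, hj⟩ := h
      rw [util_matched hM v _ hj]
      have e₁ := util_matched hM v p₁ hj
      have u₁ := hu₁ i hi
      have : min (p₁ j) (p₂ j) ≤ p₁ j := min_le_left _ _
      show 0 ≤ v i j - min (p₁ j) (p₂ j)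
      linarith
    · push_neg at h
      rw [util_unmatched v _ h]
  · intro i hi j' hj' hg
    have b₁ := hbr₁ i hi j' hj' hg
    have b₂ := hbr₂ i hi j' hj' hg
    by_cases h : ∃ j, (i, j) ∈ a
    · obtain ⟨j, hj⟩ := h
      rw [util_matched hM v _ hj]
      rw [util_matched hM v p₁ hj] at b₁
      rw [util_matched hM v p₂ hj] at b₂
      have n₁ := min_le_left (p₁ j) (p₂ j)
      have n₂ := min_le_right (p₁ j) (p₂ j)
      show v i j' - min (p₁ j') (p₂ j') ≤ v i j - min (p₁ j) (p₂ j)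
      rcases min_choice (p₁ j') (p₂ j') with h | h <;> rw [h] <;> linarith
    · push_neg at h
      rw [util_unmatched v _ h]
      rw [util_unmatched v p₁ h] at b₁
      rw [util_unmatched v p₂ h] at b₂
      show v i j' - min (p₁ j') (p₂ j') ≤ 0
      rcases min_choice (p₁ j') (p₂ j') with h | h <;> rw [h] <;> linarith
  · intro j hj hns
    show min (p₁ j) (p₂ j) = 0
    rw [hz₁ j hj hns, hz₂ j hj hns, min_self]

theorem extremal_prices {B S : Finset ℕ} {g : ℕ → ℕ → Prop} {v : ℕ → ℕ → ℝ}
    {p₀ : ℕ → ℝ} {a₀ : Finset (ℕ × ℕ)} (h₀ : IsCE B S g v p₀ a₀) :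
    (∃ pmax amax, IsCE B S g v pmax amax ∧
        ∀ p a, IsCE B S g v p a → ∀ j ∈ S, p j ≤ pmax j) ∧
      (∃ pmin amin, IsCE B S g v pmin amin ∧
        ∀ p a, IsCE B S g v p a → ∀ j ∈ S, pmin j ≤ p j) := by
  have hM₀ := h₀.1
  set P : Set (ℕ → ℝ) := {p | IsCE B S g v p a₀} with hP
  set Q : ℕ → Set ℝ := fun j => (fun p : ℕ → ℝ => p j) '' P with hQ
  have hp₀ : p₀ ∈ P := h₀
  have hne : ∀ j, (Q j).Nonempty := fun j => ⟨p₀ j, p₀, hp₀, rfl⟩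
  have hbdd : ∀ j ∈ S, BddAbove (Q j) := by
    intro j hj
    by_cases hs : ∃ i, (i, j) ∈ a₀
    · obtain ⟨i, hi⟩ := hs
      refine ⟨v i j, ?_⟩
      rintro x ⟨p, hp, rfl⟩
      have hu := hp.2.2.1 i (hM₀.1 _ hi).1
      rw [util_matched hM₀ v p hi] at hu
      linarith
    · refine ⟨0, ?_⟩
      rintro x ⟨p, hp, rfl⟩
      push_neg at hs
      exact le_of_eq (hp.2.2.2.2 j hj hs)
  have hbddb : ∀ j, BddBelow (Q j) := by
    intro j
    refine ⟨0, ?_⟩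
    rintro x ⟨p, hp, rfl⟩
    exact hp.2.1 j
  set pmax : ℕ → ℝ := fun j => if j ∈ S then sSup (Q j) else 0 with hpmax
  set pmin : ℕ → ℝ := fun j => if j ∈ S then sInf (Q j) else 0 with hpmin
  have hmem_le : ∀ p ∈ P, ∀ j ∈ S, p j ≤ pmax j := by
    intro p hp j hj
    rw [hpmax]; simp only [if_pos hj]
    exact le_csSup (hbdd j hj) ⟨p, hp, rfl⟩
  have hle_mem : ∀ p ∈ P, ∀ j ∈ S, pmin j ≤ p j := by
    intro p hp j hj
    rw [hpmin]; simp only [if_pos hj]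
    exact csInf_le (hbddb j) ⟨p, hp, rfl⟩
  have hmaxS : ∀ j ∈ S, pmax j = sSup (Q j) := fun j hj => by
    rw [hpmax]; simp only [if_pos hj]
  have hminS : ∀ j ∈ S, pmin j = sInf (Q j) := fun j hj => by
    rw [hpmin]; simp only [if_pos hj]
  have hmaxCE : IsCE B S g v pmax a₀ := by
    refine ⟨hM₀, ?_, ?_, ?_, ?_⟩
    · intro j
      by_cases hj : j ∈ S
      · rw [hmaxS j hj]; exact le_trans (h₀.2.1 j) (le_csSup (hbdd j hj) ⟨p₀, hp₀, rfl⟩)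
      · rw [hpmax]; simp [if_neg hj]
    · intro i hi
      by_cases h : ∃ j, (i, j) ∈ a₀
      · obtain ⟨j, hj⟩ := h
        rw [util_matched hM₀ v pmax hj]
        have hjS := (hM₀.1 _ hj).2.1
        rw [hmaxS j hjS]
        have : sSup (Q j) ≤ v i j := by
          refine csSup_le (hne j) ?_
          rintro x ⟨p, hp, rfl⟩
          have hu := hp.2.2.1 i hi
          rw [util_matched hM₀ v p hj] at hu
          linarith
        linarith
      · push_neg at h
        rw [util_unmatched v pmax h]
    · intro i hi j' hj' hg
      by_cases h : ∃ j, (i, j) ∈ a₀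
      · obtain ⟨j, hj⟩ := h
        rw [util_matched hM₀ v pmax hj]
        have hjS := (hM₀.1 _ hj).2.1
        rw [hmaxS j hjS, hmaxS j' hj']
        have : sSup (Q j) ≤ (v i j - v i j') + sSup (Q j') := by
          refine csSup_le (hne j) ?_
          rintro x ⟨p, hp, rfl⟩
          have hb := hp.2.2.2.1 i hi j' hj' hg
          rw [util_matched hM₀ v p hj] at hb
          have := le_csSup (hbdd j' hj') (⟨p, hp, rfl⟩ : p j' ∈ Q j')
          linarith
        linarith
      · push_neg at h
        rw [util_unmatched v pmax h, hmaxS j' hj']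
        have hb := hp₀.2.2.2.1 i hi j' hj' hg
        rw [util_unmatched v p₀ h] at hb
        have := le_csSup (hbdd j' hj') (⟨p₀, hp₀, rfl⟩ : p₀ j' ∈ Q j')
        linarith
    · intro j hj hns
      rw [hmaxS j hj]
      refine le_antisymm (csSup_le (hne j) ?_) ?_
      · rintro x ⟨p, hp, rfl⟩
        exact le_of_eq (hp.2.2.2.2 j hj hns)
      · have := le_csSup (hbdd j hj) (⟨p₀, hp₀, rfl⟩ : p₀ j ∈ Q j)
        have h0 := hp₀.2.2.2.2 j hj hns
        linarith
  have hminCE : IsCE B S g v pmin a₀ := by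
    refine ⟨hM₀, ?_, ?_, ?_, ?_⟩
    · intro j
      by_cases hj : j ∈ S
      · rw [hminS j hj]
        refine le_csInf (hne j) ?_
        rintro x ⟨p, hp, rfl⟩
        exact hp.2.1 j
      · rw [hpmin]; simp [if_neg hj]
    · intro i hi
      by_cases h : ∃ j, (i, j) ∈ a₀
      · obtain ⟨j, hj⟩ := h
        rw [util_matched hM₀ v pmin hj]
        have hjS := (hM₀.1 _ hj).2.1
        rw [hminS j hjS]
        have hu := hp₀.2.2.1 i hi
        rw [util_matched hM₀ v p₀ hj] at hu
        have := csInf_le (hbddb j) (⟨p₀, hp₀, rfl⟩ : p₀ j ∈ Q j)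
        linarith
      · push_neg at h
        rw [util_unmatched v pmin h]
    · intro i hi j' hj' hg
      by_cases h : ∃ j, (i, j) ∈ a₀
      · obtain ⟨j, hj⟩ := h
        rw [util_matched hM₀ v pmin hj]
        have hjS := (hM₀.1 _ hj).2.1
        rw [hminS j hjS, hminS j' hj']
        have : (v i j' - v i j) + sInf (Q j) ≤ sInf (Q j') := by
          refine le_csInf (hne j') ?_
          rintro x ⟨p, hp, rfl⟩
          have hb := hp.2.2.2.1 i hi j' hj' hg
          rw [util_matched hM₀ v p hj] at hb
          have := csInf_le (hbddb j) (⟨p, hp, rfl⟩ : p j ∈ Q j)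
          linarith
        linarith
      · push_neg at h
        rw [util_unmatched v pmin h, hminS j' hj']
        have : (v i j' : ℝ) ≤ sInf (Q j') := by
          refine le_csInf (hne j') ?_
          rintro x ⟨p, hp, rfl⟩
          have hb := hp.2.2.2.1 i hi j' hj' hg
          rw [util_unmatched v p h] at hb
          linarith
        linarith
    · intro j hj hns
      rw [hminS j hj]
      refine le_antisymm ?_ (le_csInf (hne j) ?_)
      · have := csInf_le (hbddb j) (⟨p₀, hp₀, rfl⟩ : p₀ j ∈ Q j)
        have h0 := hp₀.2.2.2.2 j hj hns
        linarith
      · rintro x ⟨p, hp, rfl⟩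
        exact le_of_eq (hp.2.2.2.2 j hj hns).symm
  refine ⟨⟨pmax, a₀, hmaxCE, ?_⟩, ⟨pmin, a₀, hminCE, ?_⟩⟩
  · intro p a hpa j hj
    exact hmem_le p (interchange hpa h₀) j hj
  · intro p a hpa j hj
    exact hle_mem p (interchange hpa h₀) j hj

/-- Lattice structure of competitive prices: if `(p₁, a)` and `(p₂, a)` are competitive
equilibria then so are `(p₁ ⊔ p₂, a)` and `(p₁ ⊓ p₂, a)`; consequently, whenever a
competitive equilibrium exists, there are maximum and minimum competitive price vectors. -/
theorem competitive_prices_lattice (B S : Finset ℕ) (g : ℕ → ℕ → Prop) (v : ℕ → ℕ → ℝ) :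
    (∀ p₁ p₂ a, IsCE B S g v p₁ a → IsCE B S g v p₂ a →
      IsCE B S g v (fun j => max (p₁ j) (p₂ j)) a ∧
      IsCE B S g v (fun j => min (p₁ j) (p₂ j)) a) ∧
    ((∃ p a, IsCE B S g v p a) →
      (∃ pmax amax, IsCE B S g v pmax amax ∧
        ∀ p a, IsCE B S g v p a → ∀ j ∈ S, p j ≤ pmax j) ∧
      (∃ pmin amin, IsCE B S g v pmin amin ∧
        ∀ p a, IsCE B S g v p a → ∀ j ∈ S, pmin j ≤ p j)) := by
  refine ⟨fun p₁ p₂ a h₁ h₂ => ⟨ce_max h₁ h₂, ce_min h₁ h₂⟩, ?_⟩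
  rintro ⟨p₀, a₀, h₀⟩
  exact extremal_prices h₀
end

section
/- In any competitive equilibrium of a unit-demand buyer-seller market with trade graph G, the allocation maximizes social welfare (the sum of the values v_{ij} over transacting pairs) among all allocations respecting the graph G (First Welfare Theorem). -/
open Finset

/-- First Welfare Theorem: in a competitive equilibrium, the allocation maximizes social
welfare among all allocations respecting the trade graph `g`. -/
theorem first_welfare_theorem (B S : Finset ℕ) (g : ℕ → ℕ → Prop) (v : ℕ → ℕ → ℝ)
    (p : ℕ → ℝ) (a : Finset (ℕ × ℕ)) (hce : IsCE B S g v p a)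
    (a' : Finset (ℕ × ℕ)) (ha' : IsMatching B S g a') :
    ∑ e ∈ a', v e.1 e.2 ≤ ∑ e ∈ a, v e.1 e.2 := by
  obtain ⟨⟨hm1, hm2⟩, hp, hu0, hopt, hunsold⟩ := hce
  obtain ⟨ha1, ha2⟩ := ha'
  have key : ∀ e ∈ a', v e.1 e.2 ≤ util v p a e.1 + p e.2 := by
    intro e he
    have := hopt e.1 (ha1 e he).1 e.2 (ha1 e he).2.1 (ha1 e he).2.2
    linarith
  have h1 : ∑ e ∈ a', v e.1 e.2 ≤ ∑ e ∈ a', util v p a e.1 + ∑ e ∈ a', p e.2 := by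
    rw [← Finset.sum_add_distrib]
    exact Finset.sum_le_sum key
  have injB' : ∀ e ∈ a', ∀ e' ∈ a', e.1 = e'.1 → e = e' := by
    intro e he e' he' h
    by_contra hne
    exact (ha2 e he e' he' hne).1 h
  have injS' : ∀ e ∈ a', ∀ e' ∈ a', e.2 = e'.2 → e = e' := by
    intro e he e' he' h
    by_contra hne
    exact (ha2 e he e' he' hne).2 h
  have injSa : ∀ e ∈ a, ∀ e' ∈ a, e.2 = e'.2 → e = e' := by
    intro e he e' he' h
    by_contra hne
    exact (hm2 e he e' he' hne).2 h
  have h2 : ∑ e ∈ a', util v p a e.1 ≤ ∑ i ∈ B, util v p a i := by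
    rw [← Finset.sum_image injB']
    apply Finset.sum_le_sum_of_subset_of_nonneg
    · intro i hi
      obtain ⟨e, he, rfl⟩ := Finset.mem_image.mp hi
      exact (ha1 e he).1
    · intro i hi _
      exact hu0 i hi
  have h3 : ∑ e ∈ a', p e.2 ≤ ∑ j ∈ S, p j := by
    rw [← Finset.sum_image injS']
    apply Finset.sum_le_sum_of_subset_of_nonneg
    · intro j hj
      obtain ⟨e, he, rfl⟩ := Finset.mem_image.mp hj
      exact (ha1 e he).2.1
    · intro j _ _
      exact hp j
  have h4 : ∑ i ∈ B, util v p a i = ∑ e ∈ a, (v e.1 e.2 - p e.2) := by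
    unfold util
    exact Finset.sum_fiberwise_of_maps_to (fun e he => (hm1 e he).1) _
  have h5 : ∑ j ∈ S, p j = ∑ e ∈ a, p e.2 := by
    rw [← Finset.sum_image injSa]
    symm
    apply Finset.sum_subset
    · intro j hj
      obtain ⟨e, he, rfl⟩ := Finset.mem_image.mp hj
      exact (hm1 e he).2.1
    · intro j hjS hjnot
      apply hunsold j hjS
      intro i hi
      exact hjnot (Finset.mem_image.mpr ⟨(i, j), hi, rfl⟩)
  have h6 : ∑ e ∈ a, (v e.1 e.2 - p e.2) + ∑ e ∈ a, p e.2 = ∑ e ∈ a, v e.1 e.2 := by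
    rw [← Finset.sum_add_distrib]
    simp
  linarith
end

section
/- In a homogeneous-goods market, when a seller with no prior links (or a non-transacting seller) gains a single new link to buyer i₀, the optimal matching value changes so that at most one previously unmatched buyer becomes matched, and if a buyer i_t newly obtains a good along the resulting alternating path, then v_{i_t} ≤ v_{i_ℓ} for every buyer i_ℓ earlier on that path. -/
open Finset

namespace AddLink

def Semi (X : Finset (ℕ × ℕ)) : Prop :=
  ∀ e ∈ X, ∀ e' ∈ X, e ≠ e' → e.1 ≠ e'.1 ∧ e.2 ≠ e'.2

lemma Semi.mono {X Y : Finset (ℕ × ℕ)} (h : Semi Y) (hXY : X ⊆ Y) : Semi X :=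
  fun e he e' he' hne => h e (hXY he) e' (hXY he') hne

lemma Semi.fst_unique {X : Finset (ℕ × ℕ)} (h : Semi X) {a b c : ℕ}
    (h1 : (a, b) ∈ X) (h2 : (a, c) ∈ X) : b = c := by
  by_contra hbc
  exact (h _ h1 _ h2 (by simp [Prod.ext_iff, hbc])).1 rfl

lemma Semi.snd_unique {X : Finset (ℕ × ℕ)} (h : Semi X) {a b c : ℕ}
    (h1 : (a, c) ∈ X) (h2 : (b, c) ∈ X) : a = b := by
  by_contra hab
  exact (h _ h1 _ h2 (by simp [Prod.ext_iff, hab])).2 rfl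

lemma Semi.eq_of_fst {X : Finset (ℕ × ℕ)} (h : Semi X) {a b : ℕ} (hab : (a, b) ∈ X) :
    ∀ e ∈ X, e.1 = a → e = (a, b) := by
  intro e he h1
  have h2 : (a, e.2) ∈ X := by rw [← h1, Prod.mk.eta]; exact he
  exact Prod.ext_iff.2 ⟨h1, h.fst_unique h2 hab⟩

lemma Semi.eq_of_snd {X : Finset (ℕ × ℕ)} (h : Semi X) {a b : ℕ} (hab : (a, b) ∈ X) :
    ∀ e ∈ X, e.2 = b → e = (a, b) := by
  intro e he h2
  have h1 : (e.1, b) ∈ X := by rw [← h2, Prod.mk.eta]; exact he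
  exact Prod.ext_iff.2 ⟨h.snd_unique h1 hab, h2⟩

lemma Semi.insert {X : Finset (ℕ × ℕ)} (h : Semi X) {a b : ℕ}
    (ha : ∀ e ∈ X, e.1 ≠ a) (hb : ∀ e ∈ X, e.2 ≠ b) : Semi (insert (a, b) X) := by
  intro e he e' he' hne
  rcases Finset.mem_insert.1 he with rfl | he
  · rcases Finset.mem_insert.1 he' with rfl | he'
    · exact absurd rfl hne
    · exact ⟨fun hh => ha e' he' hh.symm, fun hh => hb e' he' hh.symm⟩
  · rcases Finset.mem_insert.1 he' with rfl | he'
    · exact ⟨ha e he, hb e he⟩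
    · exact h e he e' he' hne

lemma notmem_of_fst {X : Finset (ℕ × ℕ)} {a b : ℕ} (ha : ∀ e ∈ X, e.1 ≠ a) :
    (a, b) ∉ X := fun h => ha _ h rfl

lemma core (v : ℕ → ℝ) : ∀ (k : ℕ), ∀ M M' : Finset (ℕ × ℕ), M'.card ≤ k → Semi M → Semi M' →
    ∀ t₀ b₀ : ℕ, (∀ i, (i, t₀) ∉ M) → (b₀, t₀) ∈ M' →
    (∃ N, Semi N ∧ N ⊆ M ∪ M'.erase (b₀, t₀) ∧ ∑ e ∈ N, v e.1 = ∑ e ∈ M', v e.1) ∨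
    (∃ cm K, Semi K ∧ K ⊆ M ∪ M' ∧ cm ∈ M'.image Prod.fst ∧
      K.image Prod.fst ⊆ insert cm (M.image Prod.fst) ∧ cm ∉ M.image Prod.fst ∧
      ∑ e ∈ K, v e.1 = ∑ e ∈ M, v e.1 + v cm ∧
      (∃ N, Semi N ∧ N ⊆ M ∪ M'.erase (b₀, t₀) ∧
        ∑ e ∈ N, v e.1 = ∑ e ∈ M', v e.1 - v cm) ∧
      ∀ f ∈ K, f ∉ M → f.1 ≠ cm →
        ∃ N, Semi N ∧ N ⊆ M ∪ M'.erase (b₀, t₀) ∧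
          ∑ e ∈ N, v e.1 = ∑ e ∈ M, v e.1 + v cm - v f.1) := by
  intro k
  induction k with
  | zero =>
    intro M M' hcard _ _ t₀ b₀ _ hb₀
    have : M' = ∅ := Finset.card_eq_zero.1 (Nat.le_zero.1 hcard)
    simp [this] at hb₀
  | succ k ih =>
    intro M M' hcard hSM hSM' t₀ b₀ hfree hb₀
    by_cases hb₀M : ∃ t₁, (b₀, t₁) ∈ M
    · obtain ⟨t₁, ht₁⟩ := hb₀M
      have ht₁t₀ : t₁ ≠ t₀ := fun h => hfree b₀ (h ▸ ht₁)
      by_cases hs : ∃ b₁, (b₁, t₁) ∈ M'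
      · -- subcase 2b: recurse
        obtain ⟨b₁, hb₁⟩ := hs
        have hb₁b₀ : b₁ ≠ b₀ := fun h => ht₁t₀ (hSM'.fst_unique (h ▸ hb₁) hb₀)
        set M₁ := M.erase (b₀, t₁) with hM₁def
        set M'₁ := M'.erase (b₀, t₀) with hM'₁def
        have hM₁sub : M₁ ⊆ M := Finset.erase_subset _ _
        have hM'₁sub : M'₁ ⊆ M' := Finset.erase_subset _ _
        have hb₀M₁ : ∀ e ∈ M₁, e.1 ≠ b₀ := fun e he h1 =>
          (Finset.mem_erase.1 he).1 (hSM.eq_of_fst ht₁ e (hM₁sub he) h1)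
        have hb₀M'₁ : ∀ e ∈ M'₁, e.1 ≠ b₀ := fun e he h1 =>
          (Finset.mem_erase.1 he).1 (hSM'.eq_of_fst hb₀ e (hM'₁sub he) h1)
        have hb₀U : ∀ e ∈ M₁ ∪ M'₁, e.1 ≠ b₀ := by
          intro e he
          rcases Finset.mem_union.1 he with h | h
          · exact hb₀M₁ e h
          · exact hb₀M'₁ e h
        have ht₀M₁ : ∀ e ∈ M₁, e.2 ≠ t₀ := fun e he h2 =>
          hfree e.1 (by rw [← h2, Prod.mk.eta]; exact hM₁sub he)
        have ht₀M'₁ : ∀ e ∈ M'₁, e.2 ≠ t₀ := fun e he h2 =>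
          (Finset.mem_erase.1 he).1 (hSM'.eq_of_snd hb₀ e (hM'₁sub he) h2)
        have ht₀U : ∀ e ∈ M₁ ∪ M'₁, e.2 ≠ t₀ := by
          intro e he
          rcases Finset.mem_union.1 he with h | h
          · exact ht₀M₁ e h
          · exact ht₀M'₁ e h
        have ht₁M₁ : ∀ e ∈ M₁, e.2 ≠ t₁ := fun e he h2 =>
          (Finset.mem_erase.1 he).1 (hSM.eq_of_snd ht₁ e (hM₁sub he) h2)
        have ht₁M'₂ : ∀ e ∈ M'₁.erase (b₁, t₁), e.2 ≠ t₁ := fun e he h2 =>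
          (Finset.mem_erase.1 he).1
            (hSM'.eq_of_snd hb₁ e (hM'₁sub (Finset.erase_subset _ _ he)) h2)
        have ht₁U : ∀ e ∈ M₁ ∪ M'₁.erase (b₁, t₁), e.2 ≠ t₁ := by
          intro e he
          rcases Finset.mem_union.1 he with h | h
          · exact ht₁M₁ e h
          · exact ht₁M'₂ e h
        have hfree1 : ∀ i, (i, t₁) ∉ M₁ := fun i h => ht₁M₁ _ h rfl
        have hb₁M'₁ : (b₁, t₁) ∈ M'₁ :=
          Finset.mem_erase.2 ⟨by simp [Prod.ext_iff, hb₁b₀], hb₁⟩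
        have hcard1 : M'₁.card ≤ k := by
          rw [hM'₁def, Finset.card_erase_of_mem hb₀]
          omega
        have hsumM₁ : ∑ e ∈ M₁, v e.1 = ∑ e ∈ M, v e.1 - v b₀ :=
          Finset.sum_erase_eq_sub (f := fun e => v e.1) ht₁
        have hsumM'₁ : ∑ e ∈ M'₁, v e.1 = ∑ e ∈ M', v e.1 - v b₀ :=
          Finset.sum_erase_eq_sub (f := fun e => v e.1) hb₀
        have hUup : M₁ ∪ M'₁ ⊆ M ∪ M' := Finset.union_subset_union hM₁sub hM'₁sub
        have hUup' : M₁ ∪ M'₁.erase (b₁, t₁) ⊆ M ∪ M'₁ :=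
          Finset.union_subset_union hM₁sub (Finset.erase_subset _ _)
        have hUup2 : M₁ ∪ M'₁.erase (b₁, t₁) ⊆ M₁ ∪ M'₁ :=
          Finset.union_subset_union (Finset.Subset.refl _) (Finset.erase_subset _ _)
        rcases ih M₁ M'₁ hcard1 (hSM.mono hM₁sub) (hSM'.mono hM'₁sub) t₁ b₁ hfree1 hb₁M'₁ with
          ⟨N₁, hN₁s, hN₁sub, hN₁sum⟩ |
          ⟨cm, K₁, hK₁s, hK₁sub, hcmM'₁, hK₁im, hcmM₁, hK₁sum,
            ⟨N'₁, hN'₁s, hN'₁sub, hN'₁sum⟩, hA5₁⟩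
        · -- inner seller end: extend
          refine Or.inl ⟨insert (b₀, t₁) N₁, ?_, ?_, ?_⟩
          · exact hN₁s.insert (fun e he => hb₀U e (hUup2 (hN₁sub he)))
              (fun e he => ht₁U e (hN₁sub he))
          · refine Finset.insert_subset (Finset.mem_union.2 (Or.inl ht₁)) ?_
            exact (hN₁sub.trans hUup')
          · rw [Finset.sum_insert (notmem_of_fst fun e he => hb₀U e (hUup2 (hN₁sub he)))]
            rw [hN₁sum, hsumM'₁]; ring
        · -- inner buyer end: extend
          have hcmb₀ : cm ≠ b₀ := by
            obtain ⟨e, he, he1⟩ := Finset.mem_image.1 hcmM'₁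
            exact he1 ▸ hb₀M'₁ e he
          have hcmM : cm ∉ M.image Prod.fst := by
            intro h
            obtain ⟨e, he, he1⟩ := Finset.mem_image.1 h
            have heM₁ : e ∈ M₁ := Finset.mem_erase.2
              ⟨fun hh => hcmb₀ (by rw [← he1, hh]), he⟩
            exact hcmM₁ (Finset.mem_image.2 ⟨e, heM₁, he1⟩)
          have haK₁ : ∀ e ∈ K₁, e.1 ≠ b₀ := fun e he => hb₀U e (hK₁sub he)
          have hbK₁ : ∀ e ∈ K₁, e.2 ≠ t₀ := fun e he => ht₀U e (hK₁sub he)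
          refine Or.inr ⟨cm, insert (b₀, t₀) K₁, ?_, ?_, ?_, ?_, hcmM, ?_, ?_, ?_⟩
          · exact hK₁s.insert haK₁ hbK₁
          · exact Finset.insert_subset (Finset.mem_union.2 (Or.inr hb₀))
              (hK₁sub.trans hUup)
          · exact Finset.image_subset_image hM'₁sub hcmM'₁
          · rw [Finset.image_insert]
            intro x hx
            rcases Finset.mem_insert.1 hx with rfl | hx
            · exact Finset.mem_insert.2 (Or.inr (Finset.mem_image.2 ⟨(x, t₁), ht₁, rfl⟩))
            · rcases Finset.mem_insert.1 (hK₁im hx) with rfl | hx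
              · exact Finset.mem_insert_self _ _
              · exact Finset.mem_insert.2 (Or.inr (Finset.image_subset_image hM₁sub hx))
          · rw [Finset.sum_insert (notmem_of_fst haK₁), hK₁sum, hsumM₁]; ring
          · refine ⟨insert (b₀, t₁) N'₁, ?_, ?_, ?_⟩
            · exact hN'₁s.insert (fun e he => hb₀U e (hUup2 (hN'₁sub he)))
                (fun e he => ht₁U e (hN'₁sub he))
            · exact Finset.insert_subset (Finset.mem_union.2 (Or.inl ht₁))
                (hN'₁sub.trans hUup')
            · rw [Finset.sum_insert
                (notmem_of_fst fun e he => hb₀U e (hUup2 (hN'₁sub he)))]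
              rw [hN'₁sum, hsumM'₁]; ring
          · intro f hf hfM hfcm
            rcases Finset.mem_insert.1 hf with rfl | hf
            · refine ⟨K₁, hK₁s, hK₁sub.trans (Finset.union_subset_union hM₁sub le_rfl), ?_⟩
              rw [hK₁sum, hsumM₁]; ring
            · have hfM₁ : f ∉ M₁ := fun hh => hfM (hM₁sub hh)
              obtain ⟨N₁, hN₁s, hN₁sub, hN₁sum⟩ := hA5₁ f hf hfM₁ hfcm
              refine ⟨insert (b₀, t₁) N₁, ?_, ?_, ?_⟩
              · exact hN₁s.insert (fun e he => hb₀U e (hUup2 (hN₁sub he)))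
                  (fun e he => ht₁U e (hN₁sub he))
              · exact Finset.insert_subset (Finset.mem_union.2 (Or.inl ht₁))
                  (hN₁sub.trans hUup')
              · rw [Finset.sum_insert
                  (notmem_of_fst fun e he => hb₀U e (hUup2 (hN₁sub he)))]
                rw [hN₁sum, hsumM₁]; ring
      · -- subcase 2a: seller end
        push_neg at hs
        have ha : ∀ e ∈ M'.erase (b₀, t₀), e.1 ≠ b₀ := fun e he h1 =>
          (Finset.mem_erase.1 he).1 (hSM'.eq_of_fst hb₀ e (Finset.erase_subset _ _ he) h1)
        have hb : ∀ e ∈ M'.erase (b₀, t₀), e.2 ≠ t₁ := fun e he h2 =>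
          hs e.1 (by rw [← h2, Prod.mk.eta]; exact Finset.erase_subset _ _ he)
        refine Or.inl ⟨insert (b₀, t₁) (M'.erase (b₀, t₀)), ?_, ?_, ?_⟩
        · exact (hSM'.mono (Finset.erase_subset _ _)).insert ha hb
        · exact Finset.insert_subset (Finset.mem_union.2 (Or.inl ht₁))
            Finset.subset_union_right
        · rw [Finset.sum_insert (notmem_of_fst ha),
            Finset.sum_erase_eq_sub (f := fun e => v e.1) hb₀]
          ring
    · -- case 1: buyer end immediately
      push_neg at hb₀M
      have ha : ∀ e ∈ M, e.1 ≠ b₀ := fun e he h =>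
        hb₀M e.2 (by rw [← h, Prod.mk.eta]; exact he)
      have hb : ∀ e ∈ M, e.2 ≠ t₀ := fun e he h =>
        hfree e.1 (by rw [← h, Prod.mk.eta]; exact he)
      refine Or.inr ⟨b₀, insert (b₀, t₀) M, hSM.insert ha hb, ?_, ?_, ?_, ?_, ?_, ?_, ?_⟩
      · exact Finset.insert_subset (Finset.mem_union.2 (Or.inr hb₀)) Finset.subset_union_left
      · exact Finset.mem_image.2 ⟨(b₀, t₀), hb₀, rfl⟩
      · rw [Finset.image_insert]
      · exact fun h => by
          obtain ⟨e, he, he1⟩ := Finset.mem_image.1 h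
          exact ha e he he1
      · rw [Finset.sum_insert (notmem_of_fst ha)]; ring
      · refine ⟨M'.erase (b₀, t₀), hSM'.mono (Finset.erase_subset _ _),
          Finset.subset_union_right, ?_⟩
        exact Finset.sum_erase_eq_sub (f := fun e => v e.1) hb₀
      · intro f hf hfM hfcm
        rcases Finset.mem_insert.1 hf with rfl | hf
        · exact absurd rfl hfcm
        · exact absurd hf hfM

lemma Wspec (B S : Finset ℕ) (g : ℕ → ℕ → Prop) (v : ℕ → ℝ) :
    (∃ N, IsMatching B S g N ∧ W B S g (fun i _ => v i) = ∑ e ∈ N, v e.1) ∧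
    (∀ N, IsMatching B S g N → ∑ e ∈ N, v e.1 ≤ W B S g (fun i _ => v i)) := by
  classical
  have hset : {x | ∃ M : Finset (ℕ × ℕ), IsMatching B S g M ∧
      x = ∑ e ∈ M, (fun i _ => v i) e.1 e.2} =
      {x | ∃ M : Finset (ℕ × ℕ), IsMatching B S g M ∧ x = ∑ e ∈ M, v e.1} := rfl
  have hW : W B S g (fun i _ => v i) =
      sSup {x | ∃ M : Finset (ℕ × ℕ), IsMatching B S g M ∧ x = ∑ e ∈ M, v e.1} := by
    rw [W]
  set s : Set ℝ := {x | ∃ M : Finset (ℕ × ℕ), IsMatching B S g M ∧ x = ∑ e ∈ M, v e.1}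
    with hs
  have hne : s.Nonempty := ⟨0, ∅, ⟨fun e he => absurd he (by simp),
    fun e he => absurd he (by simp)⟩, by simp⟩
  have hfin : s.Finite := by
    have hsub : s ⊆ (fun N : Finset (ℕ × ℕ) => ∑ e ∈ N, v e.1) '' ↑((B ×ˢ S).powerset) := by
      rintro x ⟨N, hN, rfl⟩
      refine ⟨N, ?_, rfl⟩
      simp only [Finset.coe_powerset, Set.mem_preimage, Set.mem_powerset_iff,
        Finset.coe_subset, Finset.mem_coe]
      intro e he
      have h := hN.1 e he
      exact Finset.mem_product.2 ⟨h.1, h.2.1⟩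
    exact (((B ×ˢ S).powerset.finite_toSet).image _).subset hsub
  constructor
  · obtain ⟨N, hN, h⟩ := hne.csSup_mem hfin
    exact ⟨N, hN, by rw [hW]; exact h⟩
  · intro N hN
    rw [hW]
    exact le_csSup hfin.bddAbove ⟨N, hN, rfl⟩

end AddLink

open AddLink

/-- Adding a single link lemma (homogeneous goods): let `M` be an optimal matching under
`g`, `j₀ ∈ S` a seller unmatched in `M`, and add the single link `(i₀, j₀)`. Then there is
an optimal matching `M'` for the new graph in which at most one previously unmatched buyer
becomes matched, and any such newly matched buyer has value at most the value of every
buyer whose matched partner changed (the buyers along the alternating path). -/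
theorem add_one_link (B S : Finset ℕ) (g : ℕ → ℕ → Prop) (v : ℕ → ℝ) (hv : ∀ i, 0 ≤ v i)
    (M : Finset (ℕ × ℕ)) (hM : IsMatching B S g M)
    (hMopt : ∑ e ∈ M, v e.1 = W B S g (fun i _ => v i))
    (j₀ : ℕ) (hj₀ : j₀ ∈ S) (hfree : ∀ i, (i, j₀) ∉ M) (i₀ : ℕ) (hi₀ : i₀ ∈ B) :
    ∃ M' : Finset (ℕ × ℕ),
      IsMatching B S (fun i j => g i j ∨ (i = i₀ ∧ j = j₀)) M' ∧
      ∑ e ∈ M', v e.1 = W B S (fun i j => g i j ∨ (i = i₀ ∧ j = j₀)) (fun i _ => v i) ∧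
      ((M'.image Prod.fst) \ (M.image Prod.fst)).card ≤ 1 ∧
      ∀ it ∈ (M'.image Prod.fst) \ (M.image Prod.fst),
        ∀ e ∈ M', e.1 ∈ M.image Prod.fst → e ∉ M → v it ≤ v e.1 := by
  classical
  obtain ⟨⟨M', hM', hW'eq⟩, hle'⟩ :=
    Wspec B S (fun i j => g i j ∨ (i = i₀ ∧ j = j₀)) v
  obtain ⟨_, hle⟩ := Wspec B S g v
  have hMg' : IsMatching B S (fun i j => g i j ∨ (i = i₀ ∧ j = j₀)) M :=
    ⟨fun e he => ⟨(hM.1 e he).1, (hM.1 e he).2.1, Or.inl (hM.1 e he).2.2⟩, hM.2⟩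
  have hWW' : W B S g (fun i _ => v i) ≤
      W B S (fun i j => g i j ∨ (i = i₀ ∧ j = j₀)) (fun i _ => v i) := by
    rw [← hMopt]; exact hle' M hMg'
  by_cases hc : W B S (fun i j => g i j ∨ (i = i₀ ∧ j = j₀)) (fun i _ => v i) ≤
      W B S g (fun i _ => v i)
  · refine ⟨M, hMg', ?_, ?_, ?_⟩
    · rw [hMopt]; exact le_antisymm hWW' hc
    · simp
    · intro it hit e he h1 h2
      exact absurd he h2
  · push_neg at hc
    have hnew : (i₀, j₀) ∈ M' := by
      by_contra h
      have hMg : IsMatching B S g M' := by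
        refine ⟨fun e he => ⟨(hM'.1 e he).1, (hM'.1 e he).2.1, ?_⟩, hM'.2⟩
        rcases (hM'.1 e he).2.2 with hg | ⟨h1, h2⟩
        · exact hg
        · exact absurd (by rw [← Prod.mk.eta (p := e), h1, h2] : e = (i₀, j₀)) (fun hh => h (hh ▸ he))
      have := hle M' hMg
      rw [← hW'eq] at this
      exact absurd this (not_le.2 hc)
    have honly : ∀ e ∈ M', e ≠ (i₀, j₀) → g e.1 e.2 := by
      intro e he hne
      rcases (hM'.1 e he).2.2 with hg | ⟨h1, h2⟩
      · exact hg
      · exact absurd (Prod.ext_iff.2 ⟨h1, h2⟩) hne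
    have hgmem : ∀ N : Finset (ℕ × ℕ), N ⊆ M ∪ M'.erase (i₀, j₀) → IsMatching B S g N →
        True := fun _ _ _ => trivial
    have hmkg : ∀ N : Finset (ℕ × ℕ), Semi N → N ⊆ M ∪ M'.erase (i₀, j₀) →
        IsMatching B S g N := by
      intro N hNs hNsub
      refine ⟨fun e he => ?_, hNs⟩
      rcases Finset.mem_union.1 (hNsub he) with h | h
      · exact hM.1 e h
      · obtain ⟨hne, heM'⟩ := Finset.mem_erase.1 h
        exact ⟨(hM'.1 e heM').1, (hM'.1 e heM').2.1, honly e heM' hne⟩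
    rcases core v M'.card M M' le_rfl hM.2 hM'.2 j₀ i₀ hfree hnew with
      ⟨N, hNs, hNsub, hNsum⟩ |
      ⟨cm, K, hKs, hKsub, hcmM', hKim, hcmM, hKsum,
        ⟨N', hN's, hN'sub, hN'sum⟩, hA5⟩
    · have := hle N (hmkg N hNs hNsub)
      rw [hNsum, ← hW'eq] at this
      exact absurd this (not_le.2 hc)
    · have hKg' : IsMatching B S (fun i j => g i j ∨ (i = i₀ ∧ j = j₀)) K := by
        refine ⟨fun e he => ?_, hKs⟩
        rcases Finset.mem_union.1 (hKsub he) with h | h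
        · exact (hMg'.1 e h)
        · exact hM'.1 e h
      have h2 : ∑ e ∈ M', v e.1 - v cm ≤ W B S g (fun i _ => v i) := by
        rw [← hN'sum]; exact hle N' (hmkg N' hN's hN'sub)
      have h3 : ∑ e ∈ K, v e.1 ≤
          W B S (fun i j => g i j ∨ (i = i₀ ∧ j = j₀)) (fun i _ => v i) := hle' K hKg'
      have hKW' : ∑ e ∈ K, v e.1 =
          W B S (fun i j => g i j ∨ (i = i₀ ∧ j = j₀)) (fun i _ => v i) := by
        rw [hKsum, hMopt] at *
        rw [hW'eq] at *
        linarith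
      refine ⟨K, hKg', hKW', ?_, ?_⟩
      · have hsub : (K.image Prod.fst) \ (M.image Prod.fst) ⊆ {cm} := by
          intro x hx
          obtain ⟨h1, h2⟩ := Finset.mem_sdiff.1 hx
          rcases Finset.mem_insert.1 (hKim h1) with rfl | h
          · exact Finset.mem_singleton_self _
          · exact absurd h h2
        exact le_trans (Finset.card_le_card hsub) (by simp)
      · intro it hit e he h1 h2
        have hitcm : it = cm := by
          obtain ⟨ha, hb⟩ := Finset.mem_sdiff.1 hit
          rcases Finset.mem_insert.1 (hKim ha) with rfl | h
          · rfl
          · exact absurd h hb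
        have hecm : e.1 ≠ cm := fun hh => hcmM (hh ▸ h1)
        obtain ⟨N, hNs, hNsub, hNsum⟩ := hA5 e he h2 hecm
        have := hle N (hmkg N hNs hNsub)
        rw [hNsum, ← hMopt] at this
        rw [hitcm]
        linarith
end
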